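/- arXiv:1705.05709 — 8 statements merged into one kernel-verified Lean document; each statement's English description precedes it below -/
import Mathlib

section
/- Let n ≥ 1 and let S be a subsemigroup of the full transformation monoid T_n. Suppose X is a generating set for S such that rank(xyz) < rank(y) for all x, y, z ∈ X (where xyz denotes the composite: first apply x, then y, then z). Then S is ubiquitous, i.e., every two irredundant generating sets of S have the same cardinality (and hence every irredundant generating set is a smallest generating set). -/
/-- The rank of a transformation of `Fin n`: the size of its image. -/
def trank {n : ℕ} (f : Fin n → Fin n) : ℕ := (Finset.univ.image f).card

/-- The subsemigroup (of the full transformation monoid, with composition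
written left to right, so the product `f * g` is `g ∘ f`) generated by a set
of transformations. -/
inductive SgClosure {α : Type*} (X : Set (α → α)) : (α → α) → Prop
  | base {f : α → α} : f ∈ X → SgClosure X f
  | comp {f g : α → α} : SgClosure X f → SgClosure X g → SgClosure X (g ∘ f)

/-!
Write `S = ⟨X⟩`. If `y` lies in a generating set `U` of `S` but not in `⟨U \ {y}⟩`, then some
letter `x` of an `X`-word for `y` lies outside `⟨U \ {y}⟩`, so `x ∈ S¹yS¹` and `rank x ≤ rank y`.
The rank hypothesis gives `rank (sxt) < rank x` for `s, t ∈ S`, hence `y ∉ SyS`. This yields a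
Steinitz exchange property: for any other generating set `Z`, some `z ∈ Z` can replace `y`, since
a `Z`-word for `y` with two letters outside `⟨U \ {y}⟩` would put `y` in `SyS`. Exchanging
elements one at a time turns a generating set `U` into a generating subset of an irredundant
generating set `Z` with at most `|U|` elements, which must be `Z` itself; so `|Z| ≤ |U|`.
-/

def SgClosure₁ {α : Type*} (X : Set (α → α)) (f : α → α) : Prop :=
  f = id ∨ SgClosure X f

section Semigroup

variable {α : Type*} {X U W Z : Set (α → α)} {a b f t y z : α → α}

namespace SgClosure

theorem le_of_forall (h : ∀ x ∈ X, SgClosure W x) : SgClosure X ≤ SgClosure W := by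
  intro f hf
  induction hf with
  | base hx => exact h _ hx
  | comp _ _ ihf ihg => exact comp ihf ihg

theorem mono (hXW : X ⊆ W) : SgClosure X ≤ SgClosure W :=
  le_of_forall fun _ hx => base (hXW hx)

theorem nonempty (hf : SgClosure X f) : X.Nonempty := by
  induction hf with
  | base hx => exact ⟨_, hx⟩
  | comp _ _ ihf => exact ihf

theorem exists_eq_mem_comp (hf : SgClosure X f) : ∃ u ∈ X, ∃ f₀, f = u ∘ f₀ := by
  induction hf with
  | base hu => exact ⟨_, hu, id, rfl⟩
  | @comp f _ _ _ _ ihg =>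
    obtain ⟨u, hu, g₀, rfl⟩ := ihg
    exact ⟨u, hu, g₀ ∘ f, rfl⟩

theorem exists_eq_comp_mem (hf : SgClosure X f) : ∃ v ∈ X, ∃ f₀, f = f₀ ∘ v := by
  induction hf with
  | base hv => exact ⟨_, hv, id, rfl⟩
  | @comp _ g _ _ ihf _ =>
    obtain ⟨v, hv, f₀, rfl⟩ := ihf
    exact ⟨v, hv, g ∘ f₀, rfl⟩

end SgClosure

namespace SgClosure₁

theorem mono (h : SgClosure X ≤ SgClosure W) (ha : SgClosure₁ X a) : SgClosure₁ W a :=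
  ha.imp_right (h a)

theorem comp (ha : SgClosure₁ X a) (hb : SgClosure₁ X b) : SgClosure₁ X (b ∘ a) := by
  rcases ha with rfl | ha
  · exact hb
  · rcases hb with rfl | hb
    · exact .inr ha
    · exact .inr (.comp ha hb)

theorem comp_sgClosure (ha : SgClosure₁ X a) (ht : SgClosure X t) : SgClosure X (a ∘ t) := by
  rcases ha with rfl | ha
  · exact ht
  · exact .comp ht ha

end SgClosure₁

namespace SgClosure

theorem comp_sgClosure₁ (ht : SgClosure X t) (ha : SgClosure₁ X a) : SgClosure X (t ∘ a) := by
  rcases ha with rfl | ha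
  · exact ht
  · exact .comp ha ht

theorem outside_letters_cases {g : α → α} (hWZ : SgClosure W ≤ SgClosure Z)
    (hg : SgClosure Z g) :
    SgClosure W g ∨
    (∃ z ∈ Z, ¬ SgClosure W z ∧
      ∃ p q, SgClosure₁ W p ∧ SgClosure₁ W q ∧ g = q ∘ z ∘ p) ∨
    (∃ z₁ ∈ Z, ∃ z₂ ∈ Z, ¬ SgClosure W z₁ ∧ ¬ SgClosure W z₂ ∧
      ∃ a m b, SgClosure₁ Z a ∧ SgClosure₁ Z m ∧ SgClosure₁ Z b ∧
        g = b ∘ z₂ ∘ m ∘ z₁ ∘ a) := by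
  induction hg with
  | @base z hz =>
    by_cases hzW : SgClosure W z
    · exact .inl hzW
    · exact .inr (.inl ⟨z, hz, hzW, id, id, .inl rfl, .inl rfl, rfl⟩)
  | @comp f g hf hg ihf ihg =>
    rcases ihf with hfW | ⟨z₁, hz₁, hz₁W, p₁, q₁, hp₁, hq₁, rfl⟩ |
        ⟨z₁, hz₁, z₂, hz₂, hz₁W, hz₂W, a, m, b, ha, hm, hb, rfl⟩
    · rcases ihg with hgW | ⟨z, hz, hzW, p, q, hp, hq, rfl⟩ |
          ⟨z₁, hz₁, z₂, hz₂, hz₁W, hz₂W, a, m, b, ha, hm, hb, rfl⟩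
      · exact .inl (.comp hfW hgW)
      · exact .inr (.inl ⟨z, hz, hzW, p ∘ f, q, SgClosure₁.comp (.inr hfW) hp, hq, rfl⟩)
      · exact .inr (.inr ⟨z₁, hz₁, z₂, hz₂, hz₁W, hz₂W, a ∘ f, m, b,
          SgClosure₁.comp (.inr hf) ha, hm, hb, rfl⟩)
    · rcases ihg with hgW | ⟨z₂, hz₂, hz₂W, p₂, q₂, hp₂, hq₂, rfl⟩ |
          ⟨z₃, hz₃, z₄, hz₄, hz₃W, hz₄W, a, m, b, ha, hm, hb, rfl⟩
      · exact .inr (.inl ⟨z₁, hz₁, hz₁W, p₁, g ∘ q₁, hp₁, hq₁.comp (.inr hgW), rfl⟩)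
      · exact .inr (.inr ⟨z₁, hz₁, z₂, hz₂, hz₁W, hz₂W, p₁, p₂ ∘ q₁, q₂,
          hp₁.mono hWZ, (hq₁.comp hp₂).mono hWZ, hq₂.mono hWZ, rfl⟩)
      · exact .inr (.inr ⟨z₃, hz₃, z₄, hz₄, hz₃W, hz₄W, a ∘ q₁ ∘ z₁ ∘ p₁, m, b,
          SgClosure₁.comp (.inr hf) ha, hm, hb, rfl⟩)
    · exact .inr (.inr ⟨z₁, hz₁, z₂, hz₂, hz₁W, hz₂W, a, m, g ∘ b,
        ha, hm, hb.comp (.inr hg), rfl⟩)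

theorem exists_letter_not_sgClosure {g : α → α} (hWZ : SgClosure W ≤ SgClosure Z)
    (hg : SgClosure Z g) (hgW : ¬ SgClosure W g) :
    ∃ z ∈ Z, ¬ SgClosure W z ∧ ∃ a b, SgClosure₁ Z a ∧ SgClosure₁ Z b ∧ g = b ∘ z ∘ a := by
  rcases outside_letters_cases hWZ hg with hgW' | ⟨z, hz, hzW, p, q, hp, hq, rfl⟩ |
      ⟨z₁, hz₁, z₂, hz₂, hz₁W, -, a, m, b, ha, hm, hb, rfl⟩
  · exact absurd hgW' hgW
  · exact ⟨z, hz, hzW, p, q, hp.mono hWZ, hq.mono hWZ, rfl⟩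
  · exact ⟨z₁, hz₁, hz₁W, a, b ∘ z₂ ∘ m, ha,
      .inr (hb.comp_sgClosure ((base hz₂).comp_sgClosure₁ hm)), rfl⟩

theorem exists_eq_comp_comp_of_not_diff {g : α → α} (hg : SgClosure U g)
    (hgy : ¬ SgClosure (U \ {y}) g) :
    ∃ p q, SgClosure₁ U p ∧ SgClosure₁ U q ∧ g = q ∘ y ∘ p := by
  obtain ⟨z, hzU, hz, p, q, hp, hq, rfl⟩ :=
    exists_letter_not_sgClosure (mono Set.sdiff_subset) hg hgy
  obtain rfl : z = y := by_contra fun hzy => hz (base ⟨hzU, hzy⟩)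
  exact ⟨p, q, hp, hq, rfl⟩

theorem exists_comp_comp_eq_self {Q M P : α → α} (hyU : SgClosure U y)
    (hQ : SgClosure₁ U Q) (hM : SgClosure₁ U M) (hP : SgClosure₁ U P)
    (hy : y = Q ∘ y ∘ M ∘ y ∘ P) :
    ∃ f h, SgClosure U f ∧ SgClosure U h ∧ h ∘ y ∘ f = y :=
  ⟨M ∘ y ∘ P ∘ P, Q ∘ y ∘ M ∘ Q, hM.comp_sgClosure (hyU.comp_sgClosure₁ (hP.comp hP)),
    hQ.comp_sgClosure (hyU.comp_sgClosure₁ (hQ.comp hM)),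
    -- substitute `hy` into its own second occurrence of `y`
    (hy.trans (congrArg (fun t => Q ∘ y ∘ M ∘ t ∘ P) hy)).symm⟩

theorem insert_diff_eq (hzU : SgClosure U z) (hy : SgClosure (insert z (U \ {y})) y) :
    SgClosure (insert z (U \ {y})) = SgClosure U := by
  refine le_antisymm (le_of_forall ?_) (le_of_forall fun u hu => ?_)
  · rintro x (rfl | ⟨hxU, -⟩)
    · exact hzU
    · exact base hxU
  · by_cases huy : u = y
    · exact huy ▸ hy
    · exact base (.inr ⟨hu, huy⟩)

theorem exists_mem_sgClosure_insert_diff (hUZ : SgClosure U = SgClosure Z) (hyU : y ∈ U)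
    (hy : ¬ SgClosure (U \ {y}) y)
    (hyS : ∀ f h, SgClosure U f → SgClosure U h → h ∘ y ∘ f ≠ y) :
    ∃ z ∈ Z, SgClosure (insert z (U \ {y})) y := by
  have hWZ : SgClosure (U \ {y}) ≤ SgClosure Z := hUZ ▸ mono Set.sdiff_subset
  rcases outside_letters_cases hWZ (hUZ ▸ base hyU) with hyW | ⟨z, hz, -, p, q, hp, hq, hyz⟩ |
      ⟨z₁, hz₁, z₂, hz₂, hz₁W, hz₂W, a, m, b, ha, hm, hb, hyz⟩
  · exact absurd hyW hy
  · have hWV : SgClosure (U \ {y}) ≤ SgClosure (insert z (U \ {y})) :=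
      mono (Set.subset_insert _ _)
    exact ⟨z, hz, hyz ▸ (hq.mono hWV).comp_sgClosure
      ((base (Set.mem_insert _ _)).comp_sgClosure₁ (hp.mono hWV))⟩
  · obtain ⟨p₁, q₁, hp₁, hq₁, rfl⟩ := exists_eq_comp_comp_of_not_diff (hUZ ▸ base hz₁) hz₁W
    obtain ⟨p₂, q₂, hp₂, hq₂, rfl⟩ := exists_eq_comp_comp_of_not_diff (hUZ ▸ base hz₂) hz₂W
    have hZU := hUZ.ge
    obtain ⟨f, h, hf, hh, hfh⟩ := exists_comp_comp_eq_self (base hyU)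
      (hq₂.comp (hb.mono hZU)) ((hq₁.comp (hm.mono hZU)).comp hp₂) ((ha.mono hZU).comp hp₁) hyz
    exact absurd hfh (hyS f h hf hh)

end SgClosure

end Semigroup

section Rank

variable {n : ℕ} {X U Z : Set (Fin n → Fin n)} {f h x y : Fin n → Fin n}

theorem trank_comp_le_left (f g : Fin n → Fin n) : trank (g ∘ f) ≤ trank g :=
  Finset.card_le_card (by simp [Finset.image_subset_iff])

theorem trank_comp_le_right (f g : Fin n → Fin n) : trank (g ∘ f) ≤ trank f := by
  unfold trank
  rw [← Finset.image_image]
  exact Finset.card_image_le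

theorem trank_comp_comp_le (a w b : Fin n → Fin n) : trank (b ∘ w ∘ a) ≤ trank w :=
  (trank_comp_le_right _ _).trans (trank_comp_le_left _ _)

def RankDropsOnTriples (X : Set (Fin n → Fin n)) : Prop :=
  ∀ x ∈ X, ∀ y ∈ X, ∀ z ∈ X, trank (z ∘ y ∘ x) < trank y

theorem trank_sandwich_lt (hX : RankDropsOnTriples X) (hx : x ∈ X) (hf : SgClosure X f)
    (hh : SgClosure X h) : trank (h ∘ x ∘ f) < trank x := by
  obtain ⟨u, hu, f₀, rfl⟩ := hf.exists_eq_mem_comp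
  obtain ⟨v, hv, h₀, rfl⟩ := hh.exists_eq_comp_mem
  exact (trank_comp_comp_le f₀ (v ∘ x ∘ u) h₀).trans_lt (hX u hu x hx v hv)

theorem trank_comp_comp_lt_of_not_sgClosure_diff (hX : RankDropsOnTriples X)
    (hU : SgClosure U = SgClosure X) (hyU : y ∈ U) (hy : ¬ SgClosure (U \ {y}) y)
    (hf : SgClosure U f) (hh : SgClosure U h) :
    trank (h ∘ y ∘ f) < trank y := by
  obtain ⟨x, hxX, hxW, a, b, ha, hb, hyx⟩ := SgClosure.exists_letter_not_sgClosure
    (hU ▸ SgClosure.mono Set.sdiff_subset) (hU ▸ .base hyU) hy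
  obtain ⟨p, q, -, -, hxy⟩ :=
    SgClosure.exists_eq_comp_comp_of_not_diff (hU ▸ .base hxX : SgClosure U x) hxW
  calc trank (h ∘ y ∘ f) = trank ((h ∘ b) ∘ x ∘ (a ∘ f)) := by rw [hyx]; rfl
    _ < trank x := trank_sandwich_lt hX hxX (ha.comp_sgClosure (hU ▸ hf))
        ((hU ▸ hh : SgClosure X h).comp_sgClosure₁ hb)
    _ ≤ trank y := hxy ▸ trank_comp_comp_le p y q

theorem exists_exchange (hX : RankDropsOnTriples X) (hU : SgClosure U = SgClosure X)
    (hZ : SgClosure Z = SgClosure X) (hyU : y ∈ U) :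
    ∃ z ∈ Z, SgClosure (insert z (U \ {y})) = SgClosure U := by
  suffices ∃ z ∈ Z, SgClosure (insert z (U \ {y})) y by
    obtain ⟨z, hz, hzy⟩ := this
    exact ⟨z, hz, SgClosure.insert_diff_eq (hU ▸ hZ ▸ .base hz) hzy⟩
  by_cases hy : SgClosure (U \ {y}) y
  · obtain ⟨z, hz⟩ := SgClosure.nonempty (hZ ▸ hU ▸ .base hyU : SgClosure Z y)
    exact ⟨z, hz, SgClosure.mono (Set.subset_insert _ _) y hy⟩
  · refine SgClosure.exists_mem_sgClosure_insert_diff (hU.trans hZ.symm) hyU hy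
      fun f h hf hh hfh => ?_
    exact (trank_comp_comp_lt_of_not_sgClosure_diff hX hU hyU hy hf hh).ne (congrArg trank hfh)

theorem exists_subset_sgClosure_eq_ncard_le (hX : RankDropsOnTriples X)
    (hZ : SgClosure Z = SgClosure X) (U : Set (Fin n → Fin n))
    (hU : SgClosure U = SgClosure X) :
    ∃ V ⊆ Z, SgClosure V = SgClosure X ∧ V.ncard ≤ U.ncard := by
  induction hk : (U \ Z).ncard generalizing U with
  | zero => exact ⟨U, Set.sdiff_eq_empty.mp ((Set.ncard_eq_zero).mp hk), hU, le_rfl⟩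
  | succ k ih =>
    obtain ⟨y, hyU, hyZ⟩ := Set.nonempty_of_ncard_ne_zero (hk.trans_ne k.succ_ne_zero)
    obtain ⟨z, hz, hU'⟩ := exists_exchange hX hU hZ hyU
    have hk' : (insert z (U \ {y}) \ Z).ncard = k := by
      rw [Set.insert_sdiff_of_mem _ hz, Set.sdiff_sdiff_comm,
        Set.ncard_sdiff_singleton_of_mem (Set.mem_sdiff_of_mem hyU hyZ), hk, Nat.add_sub_cancel]
    obtain ⟨V, hVZ, hV, hle⟩ := ih _ (hU'.trans hU) hk'
    refine ⟨V, hVZ, hV, hle.trans ?_⟩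
    calc (insert z (U \ {y})).ncard ≤ (U \ {y}).ncard + 1 := Set.ncard_insert_le _ _
      _ = U.ncard := Set.ncard_sdiff_singleton_add_one hyU

theorem ncard_le_ncard_of_irredundant (hX : RankDropsOnTriples X)
    (hU : SgClosure U = SgClosure X) (hZ : SgClosure Z = SgClosure X)
    (hZirr : ∀ V, V ⊂ Z → SgClosure V ≠ SgClosure X) : Z.ncard ≤ U.ncard := by
  obtain ⟨V, hVZ, hV, hle⟩ := exists_subset_sgClosure_eq_ncard_le hX hZ U hU
  obtain rfl : V = Z := hVZ.eq_of_not_ssubset fun hVZ' => hZirr V hVZ' hV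
  exact hle

end Rank

theorem stmt_0_general {n : ℕ} (S : Set (Fin n → Fin n))
    (X : Set (Fin n → Fin n)) (hXgen : {f | SgClosure X f} = S)
    (hrank : ∀ x ∈ X, ∀ y ∈ X, ∀ z ∈ X, trank (z ∘ y ∘ x) < trank y)
    (Y₁ Y₂ : Set (Fin n → Fin n))
    (hY₁gen : {f | SgClosure Y₁ f} = S)
    (hY₁irr : ∀ Z, Z ⊂ Y₁ → {f | SgClosure Z f} ≠ S)
    (hY₂gen : {f | SgClosure Y₂ f} = S)
    (hY₂irr : ∀ Z, Z ⊂ Y₂ → {f | SgClosure Z f} ≠ S) :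
    Y₁.ncard = Y₂.ncard := by
  subst hXgen
  exact le_antisymm (ncard_le_ncard_of_irredundant hrank hY₂gen hY₁gen hY₁irr)
    (ncard_le_ncard_of_irredundant hrank hY₁gen hY₂gen hY₂irr)

/-- If `S ≤ T_n` has a generating set `X` with `rank (xyz) < rank y` for all
`x, y, z ∈ X` (products composed left to right), then `S` is ubiquitous: any
two irredundant generating sets of `S` have the same cardinality. -/
theorem stmt_0 {n : ℕ} (hn : 1 ≤ n) (S : Set (Fin n → Fin n))
    (hS : ∀ f ∈ S, ∀ g ∈ S, g ∘ f ∈ S)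
    (X : Set (Fin n → Fin n)) (hXgen : {f | SgClosure X f} = S)
    (hrank : ∀ x ∈ X, ∀ y ∈ X, ∀ z ∈ X, trank (z ∘ y ∘ x) < trank y)
    (Y₁ Y₂ : Set (Fin n → Fin n))
    (hY₁gen : {f | SgClosure Y₁ f} = S)
    (hY₁irr : ∀ Z, Z ⊂ Y₁ → {f | SgClosure Z f} ≠ S)
    (hY₂gen : {f | SgClosure Y₂ f} = S)
    (hY₂irr : ∀ Z, Z ⊂ Y₂ → {f | SgClosure Z f} ≠ S) :
    Y₁.ncard = Y₂.ncard :=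
  stmt_0_general S X hXgen hrank Y₁ Y₂ hY₁gen hY₁irr hY₂gen hY₂irr
end

section
/- Let n, r ∈ ℕ with 1 ≤ r ≤ n. Then the sum, over all partitions {A_1,…,A_r} of {1,…,n} into r nonempty parts, of the product |A_1|·|A_2|⋯|A_r| equals C(n,r)·r^{n−r}, where C(n,r) is the binomial coefficient. -/
open scoped Classical

/-- `𝒜` is a partition of (all of) `α` into `r` nonempty parts. -/
def isPartitionInto {α : Type*} (𝒜 : Finset (Finset α)) (r : ℕ) : Prop :=
  𝒜.card = r ∧ (∀ A ∈ 𝒜, A.Nonempty) ∧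
    (∀ A ∈ 𝒜, ∀ B ∈ 𝒜, A ≠ B → Disjoint A B) ∧ (∀ x : α, ∃ A ∈ 𝒜, x ∈ A)

/-!
Both sides count the idempotent maps `g : α → α` whose image has `r` elements.
Grouped by the image `S`, such a `g` fixes `S` pointwise and sends each of the other
`n - r` points anywhere in `S`: this gives `C(n, r) · r ^ (n - r)`.
Grouped by the partition of `α` into the fibres of `g`, an idempotent map with prescribed
fibres `A₁, …, A_r` amounts to the choice of one point (its value) in each `Aᵢ`:
this gives `∑ |A₁| ⋯ |A_r|`.
-/

open Finset

namespace Finpartition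

variable {α : Type*} [DecidableEq α]

lemma image_part {s : Finset α} (P : Finpartition s) : s.image P.part = P.parts := by
  ext A
  simp only [mem_image]
  refine ⟨?_, fun hA => P.part_surjOn hA⟩
  rintro ⟨a, ha, rfl⟩
  exact P.part_mem.2 ha

lemma parts_eq_parts_iff {s : Finset α} {P Q : Finpartition s} :
    P.parts = Q.parts ↔ ∀ a ∈ s, P.part a = Q.part a := by
  refine ⟨fun h a ha => (Q.part_eq_of_mem (h ▸ P.part_mem.2 ha) (P.mem_part ha)).symm,
    fun h => ?_⟩
  rw [← P.image_part, ← Q.image_part]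
  exact image_congr h

variable [Fintype α]

lemma isPartitionInto_parts (P : Finpartition (univ : Finset α)) :
    isPartitionInto P.parts #P.parts :=
  ⟨rfl, fun _ => P.nonempty_of_mem_parts, fun _ hA _ hB hAB => P.disjoint hA hB hAB,
    fun x => ⟨P.part x, P.part_mem.2 (mem_univ x), P.mem_part (mem_univ x)⟩⟩

variable {β : Type*} [DecidableEq β]

lemma mem_part_ofSetoid_ker {g : α → β} {a b : α} :
    b ∈ (ofSetoid (Setoid.ker g)).part a ↔ g a = g b :=
  mem_part_ofSetoid_iff_rel

lemma parts_ofSetoid_ker_eq_iff {g : α → β} {P : Finpartition (univ : Finset α)} :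
    (ofSetoid (Setoid.ker g)).parts = P.parts ↔ ∀ x y, y ∈ P.part x ↔ g x = g y := by
  rw [parts_eq_parts_iff]
  simp [Finset.ext_iff, mem_part_ofSetoid_ker, iff_comm]

lemma card_parts_ofSetoid_ker (g : α → β) :
    #(ofSetoid (Setoid.ker g)).parts = #(univ.image g) := by
  have hpart : (ofSetoid (Setoid.ker g)).part = (fun s => ({b | s = g b} : Finset α)) ∘ g := by
    ext a b
    simp [mem_part_ofSetoid_ker]
  rw [← image_part, hpart, ← image_image]
  refine card_image_of_injOn ?_
  intro s hs s' _ h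
  obtain ⟨a, -, rfl⟩ := mem_image.1 hs
  simpa [eq_comm] using (Finset.ext_iff.1 h a).1 (by simp)

end Finpartition

noncomputable def isPartitionInto.toFinpartition {α : Type*} [Fintype α] [DecidableEq α]
    {𝒜 : Finset (Finset α)} {r : ℕ} (h : isPartitionInto 𝒜 r) :
    Finpartition (univ : Finset α) :=
  .ofExistsUnique 𝒜 (fun _ _ => subset_univ _)
    (fun x _ => by
      obtain ⟨A, hA, hxA⟩ := h.2.2.2 x
      refine ⟨A, ⟨hA, hxA⟩, fun B hB => ?_⟩
      by_contra hBA
      exact disjoint_left.1 (h.2.2.1 B hB.1 A hA hBA) hB.2 hxA)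
    (fun h0 => not_nonempty_empty (h.2.1 ∅ h0))

section Idempotent

variable {α : Type*} [Fintype α] [DecidableEq α]

lemma idempotent_and_image_eq_iff {g : α → α} {S : Finset α} :
    ((∀ x, g (g x) = g x) ∧ univ.image g = S) ↔ (∀ x, g x ∈ S) ∧ ∀ x ∈ S, g x = x := by
  constructor
  · rintro ⟨hg, rfl⟩
    refine ⟨fun x => mem_image_of_mem g (mem_univ x), fun x hx => ?_⟩
    obtain ⟨y, -, rfl⟩ := mem_image.1 hx
    exact hg y
  · rintro ⟨hmaps, hfix⟩
    refine ⟨fun x => hfix _ (hmaps x), ?_⟩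
    ext x
    exact ⟨fun hx => by obtain ⟨y, -, rfl⟩ := mem_image.1 hx; exact hmaps y,
      fun hx => mem_image.2 ⟨x, mem_univ x, hfix x hx⟩⟩

lemma card_idempotent_image_eq (S : Finset α) :
    #{g : α → α | (∀ x, g (g x) = g x) ∧ univ.image g = S} = #S ^ (Fintype.card α - #S) := by
  have : ({g : α → α | (∀ x, g (g x) = g x) ∧ univ.image g = S} : Finset _) =
      Fintype.piFinset fun x => if x ∈ S then {x} else S := by
    ext g
    simp only [mem_filter, mem_univ, true_and, idempotent_and_image_eq_iff,
      Fintype.mem_piFinset]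
    rw [← forall_and]
    refine forall_congr' fun x => ?_
    by_cases hx : x ∈ S
    · simp only [hx, if_true, mem_singleton, forall_const]
      exact ⟨And.right, fun h => ⟨by rwa [h], h⟩⟩
    · simp [hx]
  rw [this, Fintype.card_piFinset]
  simp only [apply_ite card, card_singleton, prod_ite, prod_const_one, prod_const, one_mul,
    ← card_compl]
  congr 2
  ext
  simp

lemma card_idempotent_fibers_eq_parts (P : Finpartition (univ : Finset α)) :
    #{g : α → α | (∀ x, g (g x) = g x) ∧ ∀ x y, y ∈ P.part x ↔ g x = g y} =
      ∏ A ∈ P.parts, #A := by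
  let rep (A : P.parts) : α := (P.nonempty_of_mem_parts A.2).choose
  have rep_mem (A : P.parts) : rep A ∈ A.1 := (P.nonempty_of_mem_parts A.2).choose_spec
  let partOf (x : α) : P.parts := ⟨P.part x, P.part_mem.2 (mem_univ x)⟩
  have partOf_eq {A : P.parts} {x : α} (hx : x ∈ A.1) : partOf x = A :=
    Subtype.ext (P.part_eq_of_mem A.2 hx)
  rw [← prod_coe_sort, ← Fintype.card_piFinset]
  symm
  refine card_nbij' (fun t x => t (partOf x)) (fun g A => g (rep A)) ?_ ?_ ?_ ?_ <;>
    intro f hf <;>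
    simp only [mem_coe, mem_filter, mem_univ, true_and, Fintype.mem_piFinset] at hf ⊢
  · have partOf_f (A : P.parts) : partOf (f A) = A := partOf_eq (hf A)
    refine ⟨fun x => by rw [partOf_f],
      fun x y => ⟨fun hy => by rw [partOf_eq (A := partOf x) hy], fun h => ?_⟩⟩
    have := congrArg Subtype.val <| show partOf y = partOf x by
      rw [← partOf_f (partOf x), h, partOf_f]
    simp only [partOf] at this
    rw [← this]
    exact P.mem_part (mem_univ y)
  · intro A
    have hA : P.part (rep A) = A := P.part_eq_of_mem A.2 (rep_mem A)
    rw [← hA, hf.2]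
    exact (hf.1 _).symm
  · funext A
    exact congrArg f (partOf_eq (rep_mem A))
  · funext x
    exact ((hf.2 x _).1 (rep_mem (partOf x))).symm

def idempotentsOfRank (α : Type*) [Fintype α] [DecidableEq α] (r : ℕ) : Finset (α → α) :=
  {g | (∀ x, g (g x) = g x) ∧ #(univ.image g) = r}

lemma card_filter_image_eq {r : ℕ} {S : Finset α} (hS : #S = r) :
    #{g ∈ idempotentsOfRank α r | univ.image g = S} = r ^ (Fintype.card α - r) := by
  rw [idempotentsOfRank, filter_filter, ← hS, ← card_idempotent_image_eq]
  congr 1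
  refine filter_congr fun g _ => ?_
  constructor
  · rintro ⟨⟨hg, -⟩, rfl⟩
    exact ⟨hg, rfl⟩
  · rintro ⟨hg, rfl⟩
    exact ⟨⟨hg, rfl⟩, rfl⟩

lemma card_filter_parts_ofSetoid_ker_eq {r : ℕ} {𝒜 : Finset (Finset α)}
    (h : isPartitionInto 𝒜 r) :
    #{g ∈ idempotentsOfRank α r | (Finpartition.ofSetoid (Setoid.ker g)).parts = 𝒜} =
      ∏ A ∈ 𝒜, #A := by
  have hparts : h.toFinpartition.parts = 𝒜 := rfl
  conv_rhs => rw [← hparts, ← card_idempotent_fibers_eq_parts]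
  rw [idempotentsOfRank, filter_filter]
  congr 1
  refine filter_congr fun g _ => ?_
  rw [← Finpartition.parts_ofSetoid_ker_eq_iff]
  constructor
  · rintro ⟨⟨hg, -⟩, h𝒜⟩
    exact ⟨hg, h𝒜⟩
  · rintro ⟨hg, h𝒜⟩
    refine ⟨⟨hg, ?_⟩, h𝒜⟩
    rw [← Finpartition.card_parts_ofSetoid_ker, h𝒜]
    exact h.1

lemma card_idempotentsOfRank (r : ℕ) :
    #(idempotentsOfRank α r) = (Fintype.card α).choose r * r ^ (Fintype.card α - r) := by
  rw [card_eq_sum_card_fiberwise (t := powersetCard r univ) (f := fun g => univ.image g)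
    fun g hg => mem_powersetCard_univ.2 (mem_filter.1 hg).2.2]
  rw [sum_congr rfl fun S hS => card_filter_image_eq (mem_powersetCard_univ.1 hS),
    sum_const, card_powersetCard, card_univ, smul_eq_mul]

lemma card_idempotentsOfRank_eq_sum_prod (r : ℕ) :
    #(idempotentsOfRank α r) =
      ∑ 𝒜 ∈ univ.filter (fun 𝒜 : Finset (Finset α) => isPartitionInto 𝒜 r), ∏ A ∈ 𝒜, #A := by
  rw [card_eq_sum_card_fiberwise (f := fun g => (Finpartition.ofSetoid (Setoid.ker g)).parts)]
  · exact sum_congr rfl fun 𝒜 h𝒜 => card_filter_parts_ofSetoid_ker_eq (mem_filter.1 h𝒜).2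
  · intro g hg
    refine mem_filter.2 ⟨mem_univ _, ?_⟩
    rw [← (mem_filter.1 hg).2.2, ← Finpartition.card_parts_ofSetoid_ker]
    exact Finpartition.isPartitionInto_parts _

end Idempotent

theorem sum_prod_card_parts {α : Type*} [Fintype α] (r : ℕ) :
    ∑ 𝒜 ∈ univ.filter (fun 𝒜 : Finset (Finset α) => isPartitionInto 𝒜 r), ∏ A ∈ 𝒜, #A =
      (Fintype.card α).choose r * r ^ (Fintype.card α - r) := by
  classical
  rw [← card_idempotentsOfRank_eq_sum_prod, card_idempotentsOfRank]

theorem stmt_3_general (n r : ℕ) :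
    ∑ 𝒜 ∈ Finset.univ.filter
        (fun 𝒜 : Finset (Finset (Fin n)) => isPartitionInto 𝒜 r),
      ∏ A ∈ 𝒜, A.card = n.choose r * r ^ (n - r) := by
  simpa using sum_prod_card_parts (α := Fin n) r

/-- The sum over all partitions of `{1, …, n}` into `r` nonempty parts of the
product of the sizes of the parts is `C(n, r) · r ^ (n - r)`. -/
theorem stmt_3 (n r : ℕ) (h1 : 1 ≤ r) (h2 : r ≤ n) :
    ∑ 𝒜 ∈ Finset.univ.filter
        (fun 𝒜 : Finset (Finset (Fin n)) => isPartitionInto 𝒜 r),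
      ∏ A ∈ 𝒜, A.card = n.choose r * r ^ (n - r) :=
  stmt_3_general n r
end

section
/- Let n, r ∈ ℕ with 1 ≤ r ≤ n. Then the number of idempotent transformations f ∈ T_n (those satisfying f∘f = f) of rank r equals C(n,r)·r^{n−r}. -/
/-!
An idempotent `f` fixes its image `S` pointwise, so it is determined by `S` together with an
arbitrary map from the complement of `S` into `S`, and every such pair arises. There are
`C(n, r)` choices of `S` with `|S| = r`, and `r ^ (n - r)` maps from the complement for each.
-/

namespace Finset

variable {α : Type*} [DecidableEq α]

def extendIdempotent (S : Finset α) (g : {x // x ∉ S} → S) (x : α) : α :=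
  if h : x ∈ S then x else g ⟨x, h⟩

theorem extendIdempotent_comp_self (S : Finset α) (g : {x // x ∉ S} → S) :
    extendIdempotent S g ∘ extendIdempotent S g = extendIdempotent S g := by
  funext x
  by_cases hx : x ∈ S
  · simp [extendIdempotent, hx]
  · simp [extendIdempotent, hx, (g ⟨x, hx⟩).2]

variable [Fintype α]

theorem apply_eq_self_of_comp_self {f : α → α} (hf : f ∘ f = f) {y : α}
    (hy : y ∈ univ.image f) : f y = y := by
  obtain ⟨x, -, rfl⟩ := mem_image.mp hy
  exact congrFun hf x

theorem image_extendIdempotent (S : Finset α) (g : {x // x ∉ S} → S) :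
    univ.image (extendIdempotent S g) = S := by
  refine Subset.antisymm (fun y hy => ?_) (fun y hy => mem_image.mpr ⟨y, mem_univ _, dif_pos hy⟩)
  obtain ⟨x, -, rfl⟩ := mem_image.mp hy
  by_cases hx : x ∈ S <;> simp [extendIdempotent, hx]

def idempotentWithImageEquiv (S : Finset α) :
    {f : α → α // f ∘ f = f ∧ univ.image f = S} ≃ ({x // x ∉ S} → S) where
  toFun f x := ⟨f.1 x, f.2.2.subset (mem_image_of_mem f.1 (mem_univ x.1))⟩
  invFun g := ⟨extendIdempotent S g, extendIdempotent_comp_self S g, image_extendIdempotent S g⟩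
  left_inv := by
    rintro ⟨f, hf, rfl⟩
    ext x
    by_cases hx : x ∈ univ.image f
    · simp [extendIdempotent, hx, apply_eq_self_of_comp_self hf hx]
    · simp [extendIdempotent, hx]
  right_inv g := by
    funext ⟨x, hx⟩
    simp [extendIdempotent, hx]

theorem card_idempotent_image_eq (S : Finset α) :
    Fintype.card {f : α → α // f ∘ f = f ∧ univ.image f = S}
      = #S ^ (Fintype.card α - #S) := by
  rw [Fintype.card_congr (idempotentWithImageEquiv S), Fintype.card_fun,
    Fintype.card_subtype_compl, Fintype.card_coe]

theorem card_idempotent_card_image_eq (r : ℕ) :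
    Fintype.card {f : α → α // f ∘ f = f ∧ #(univ.image f) = r}
      = (Fintype.card α).choose r * r ^ (Fintype.card α - r) := by
  rw [Fintype.card_subtype, card_eq_sum_card_fiberwise (f := (univ.image ·))
    (t := powersetCard r univ) (fun f hf => by simpa using (mem_filter.mp hf).2.2),
    sum_const_nat fun S hS => ?_, card_powersetCard, card_univ]
  have hr : #S = r := (mem_powersetCard.mp hS).2
  rw [← hr, ← card_idempotent_image_eq, Fintype.card_subtype, filter_filter]
  exact congrArg card (filter_congr fun f _ =>
    ⟨fun ⟨⟨hf, _⟩, hfS⟩ => ⟨hf, hfS⟩, fun ⟨hf, hfS⟩ => ⟨⟨hf, congrArg card hfS⟩, hfS⟩⟩)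

end Finset

theorem stmt_4_general (n r : ℕ) :
    Nat.card {f : Fin n → Fin n // f ∘ f = f ∧ trank f = r}
      = n.choose r * r ^ (n - r) := by
  simpa [trank, Nat.card_eq_fintype_card] using Finset.card_idempotent_card_image_eq (α := Fin n) r

/-- The number of idempotent transformations of `{1, …, n}` of rank `r`
equals `C(n, r) · r ^ (n - r)`. -/
theorem stmt_4 (n r : ℕ) (h1 : 1 ≤ r) (h2 : r ≤ n) :
    Nat.card {f : Fin n → Fin n // f ∘ f = f ∧ trank f = r}
      = n.choose r * r ^ (n - r) :=
  stmt_4_general n r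
end

section
/- Let S be a subsemigroup of T_n, let X be a generating set for S, and let x ∈ X be such that rank(y_1 x y_2) < rank(x) for all y_1, y_2 ∈ X with y_1 ≥_J x and y_2 ≥_J x (products composed left to right). Suppose z_1,…,z_m ∈ X and the product z_1⋯z_m is J-equivalent to x (S¹(z_1⋯z_m)S¹ = S¹xS¹). Then every z_i satisfies z_i ≥_J x, the element x occurs at most once among z_1,…,z_m, and if z_i = x for some i then i = 1 or i = m. -/
/-- The set `S¹xS¹ = {x} ∪ xS ∪ Sx ∪ SxS`, with products composed left to
right (so the left-to-right product `a x b` is the function `b ∘ x ∘ a`). -/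
def transIdeal {α : Type*} (S : Set (α → α)) (x : α → α) : Set (α → α) :=
  insert x ({h | ∃ a ∈ S, h = x ∘ a} ∪ {h | ∃ b ∈ S, h = b ∘ x} ∪
    {h | ∃ a ∈ S, ∃ b ∈ S, h = b ∘ x ∘ a})

/-- The `J`-preorder on transformations relative to `S`: `x ≤_J y` iff
`S¹xS¹ ⊆ S¹yS¹`. -/
def JLE {α : Type*} (S : Set (α → α)) (x y : α → α) : Prop :=
  transIdeal S x ⊆ transIdeal S y

/-- Auxiliary: the left-to-right composite `z i ⋯ z (i+k)`
(the function `z (i+k) ∘ ⋯ ∘ z i`). -/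
def cProdAux {α : Type*} (z : ℕ → α → α) (i : ℕ) : ℕ → (α → α)
  | 0 => z i
  | k + 1 => z (i + k + 1) ∘ cProdAux z i k

/-- The left-to-right composite `z i ⋯ z j` (for `i ≤ j`). -/
def cProd {α : Type*} (z : ℕ → α → α) (i j : ℕ) : α → α :=
  cProdAux z i (j - i)

/-! The heart of the matter is that `x ∉ SxS`. If `x = b x a` with `a, b ∈ S` (left to right),
write `b = w y₁` and `a = y₂ w'` with generators `y₁, y₂ ∈ X`; then `x = w (y₁ x y₂) w'`, so
`y₁, y₂ ≥_J x` and `rank x ≤ rank (y₁ x y₂) < rank x`. Since `x ∈ S¹ z₁⋯z_m S¹`, `x` lies below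
every factor, while an occurrence of `x` strictly inside the product, or two occurrences, would put `x`
in `SxS`; for `x = x u x` this uses `x = (x u) x (u x)`. -/

section Ideal

variable {α : Type*} {S : Set (α → α)}

lemma comp_mem_of_outer_mem (hS : ∀ f ∈ S, ∀ g ∈ S, g ∘ f ∈ S) {f g : α → α}
    (hf : f ∈ insert id S) (hg : g ∈ S) : g ∘ f ∈ S := by
  rcases hf with rfl | hf
  exacts [hg, hS f hf g hg]

lemma comp_mem_of_inner_mem (hS : ∀ f ∈ S, ∀ g ∈ S, g ∘ f ∈ S) {f g : α → α}
    (hf : f ∈ S) (hg : g ∈ insert id S) : g ∘ f ∈ S := by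
  rcases hg with rfl | hg
  exacts [hf, hS f hf g hg]

lemma comp_mem_insert_id (hS : ∀ f ∈ S, ∀ g ∈ S, g ∘ f ∈ S) {f g : α → α}
    (hf : f ∈ insert id S) (hg : g ∈ insert id S) : g ∘ f ∈ insert id S := by
  rcases hf with rfl | hf
  exacts [hg, Or.inr (comp_mem_of_inner_mem hS hf hg)]

lemma mem_transIdeal_iff {x h : α → α} :
    h ∈ transIdeal S x ↔ ∃ a ∈ insert id S, ∃ b ∈ insert id S, h = b ∘ x ∘ a := by
  simp only [transIdeal, Set.mem_insert_iff, Set.mem_union, Set.mem_ofPred_eq]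
  constructor
  · rintro (rfl | (⟨a, ha, rfl⟩ | ⟨b, hb, rfl⟩) | ⟨a, ha, b, hb, rfl⟩)
    · exact ⟨id, Or.inl rfl, id, Or.inl rfl, rfl⟩
    · exact ⟨a, Or.inr ha, id, Or.inl rfl, rfl⟩
    · exact ⟨id, Or.inl rfl, b, Or.inr hb, rfl⟩
    · exact ⟨a, Or.inr ha, b, Or.inr hb, rfl⟩
  · rintro ⟨a, rfl | ha, b, rfl | hb, rfl⟩
    · exact Or.inl rfl
    · exact Or.inr (Or.inl (Or.inr ⟨b, hb, rfl⟩))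
    · exact Or.inr (Or.inl (Or.inl ⟨a, ha, rfl⟩))
    · exact Or.inr (Or.inr ⟨a, ha, b, hb, rfl⟩)

lemma mem_transIdeal_self (x : α → α) : x ∈ transIdeal S x :=
  Set.mem_insert x _

lemma comp_comp_mem_transIdeal (hS : ∀ f ∈ S, ∀ g ∈ S, g ∘ f ∈ S) {x h a b : α → α}
    (hh : h ∈ transIdeal S x) (ha : a ∈ insert id S) (hb : b ∈ insert id S) :
    b ∘ h ∘ a ∈ transIdeal S x := by
  obtain ⟨c, hc, d, hd, rfl⟩ := mem_transIdeal_iff.mp hh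
  exact mem_transIdeal_iff.mpr
    ⟨c ∘ a, comp_mem_insert_id hS ha hc, b ∘ d, comp_mem_insert_id hS hd hb, rfl⟩

lemma JLE_of_mem_transIdeal (hS : ∀ f ∈ S, ∀ g ∈ S, g ∘ f ∈ S) {x y : α → α}
    (h : x ∈ transIdeal S y) : JLE S x y := by
  intro v hv
  obtain ⟨a, ha, b, hb, rfl⟩ := mem_transIdeal_iff.mp hv
  exact comp_comp_mem_transIdeal hS h ha hb

lemma mem_transIdeal_trans (hS : ∀ f ∈ S, ∀ g ∈ S, g ∘ f ∈ S) {x y v : α → α}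
    (hxy : x ∈ transIdeal S y) (hyv : y ∈ transIdeal S v) : x ∈ transIdeal S v :=
  JLE_of_mem_transIdeal hS hyv hxy

end Ideal

section Sandwich

variable {α : Type*} {S : Set (α → α)}

/-- `x ∈ SxS`, i.e. `x = b x a` (left to right) with `a, b ∈ S`. -/
def IsSandwiched (S : Set (α → α)) (x : α → α) : Prop :=
  ∃ a ∈ S, ∃ b ∈ S, x = b ∘ x ∘ a

lemma IsSandwiched.of_mem_transIdeal (hS : ∀ f ∈ S, ∀ g ∈ S, g ∘ f ∈ S) {x a b : α → α}
    (ha : a ∈ S) (hb : b ∈ S) (h : x ∈ transIdeal S (b ∘ x ∘ a)) : IsSandwiched S x := by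
  obtain ⟨c, hc, d, hd, hx⟩ := mem_transIdeal_iff.mp h
  exact ⟨a ∘ c, comp_mem_of_outer_mem hS hc ha, d ∘ b, comp_mem_of_inner_mem hS hb hd, hx⟩

lemma IsSandwiched.of_mem_transIdeal_comp_comp (hS : ∀ f ∈ S, ∀ g ∈ S, g ∘ f ∈ S)
    {x u : α → α} (hx : x ∈ S) (hu : u ∈ insert id S) (h : x ∈ transIdeal S (x ∘ u ∘ x)) :
    IsSandwiched S x := by
  have hux : u ∘ x ∈ S := comp_mem_of_inner_mem hS hx hu
  have hxu : x ∘ u ∈ S := comp_mem_of_outer_mem hS hu hx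
  obtain ⟨a, ha | ha, b, hb | hb, hxeq⟩ := mem_transIdeal_iff.mp h
  · subst ha hb
    have hxeq' : x = x ∘ u ∘ x ∘ u ∘ x := by
      conv_lhs => rw [hxeq]
      exact congrArg (fun f => x ∘ u ∘ f) hxeq
    exact ⟨u ∘ x, hux, x ∘ u, hxu, hxeq'⟩
  · subst ha
    exact ⟨u ∘ x, hux, b, hb, hxeq⟩
  · subst hb
    exact ⟨a, ha, x ∘ u, hxu, hxeq⟩
  · exact ⟨u ∘ x ∘ a, hS a ha _ hux, b, hb, hxeq⟩

end Sandwich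

section Products

variable {α : Type*} {S : Set (α → α)}

lemma cProd_self (z : ℕ → α → α) (i : ℕ) : cProd z i i = z i := by
  simp only [cProd, Nat.sub_self, cProdAux]

lemma cProdAux_add_succ (z : ℕ → α → α) (i d e : ℕ) :
    cProdAux z i (d + e + 1) = cProdAux z (i + d + 1) e ∘ cProdAux z i d := by
  induction e with
  | zero => rfl
  | succ e ih =>
    change z (i + (d + e + 1) + 1) ∘ cProdAux z i (d + e + 1) =
      (z (i + d + 1 + e + 1) ∘ cProdAux z (i + d + 1) e) ∘ cProdAux z i d
    rw [ih, show i + (d + e + 1) + 1 = i + d + 1 + e + 1 by omega]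
    rfl

lemma cProd_split (z : ℕ → α → α) {i k j : ℕ} (hik : i ≤ k) (hkj : k < j) :
    cProd z i j = cProd z (k + 1) j ∘ cProd z i k := by
  unfold cProd
  rw [show j - i = (k - i) + (j - k - 1) + 1 by omega,
    show k + 1 = i + (k - i) + 1 by omega,
    show j - (i + (k - i) + 1) = j - k - 1 by omega, cProdAux_add_succ]

lemma cProd_succ (z : ℕ → α → α) {i j : ℕ} (hij : i ≤ j) :
    cProd z i (j + 1) = z (j + 1) ∘ cProd z i j := by
  rw [cProd_split z hij (Nat.lt_succ_self j), cProd_self]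

lemma cProd_mem (hS : ∀ f ∈ S, ∀ g ∈ S, g ∘ f ∈ S) {z : ℕ → α → α} {i j : ℕ} (hij : i ≤ j)
    (hz : ∀ t, i ≤ t → t ≤ j → z t ∈ S) : cProd z i j ∈ S := by
  induction j, hij using Nat.le_induction with
  | base => exact cProd_self z i ▸ hz i le_rfl le_rfl
  | succ j hij ih =>
    rw [cProd_succ z hij]
    exact hS _ (ih fun t h₁ h₂ => hz t h₁ (by omega)) _ (hz (j + 1) (by omega) le_rfl)

lemma cProd_mem_transIdeal (hS : ∀ f ∈ S, ∀ g ∈ S, g ∘ f ∈ S) {z : ℕ → α → α} {a i j b : ℕ}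
    (hz : ∀ t, a ≤ t → t ≤ b → z t ∈ S) (hai : a ≤ i) (hij : i ≤ j) (hjb : j ≤ b) :
    cProd z a b ∈ transIdeal S (cProd z i j) := by
  have hright : cProd z i b ∈ transIdeal S (cProd z i j) := by
    rcases hjb.eq_or_lt with rfl | hjb
    · exact mem_transIdeal_self _
    · rw [cProd_split z hij hjb]
      exact comp_comp_mem_transIdeal (a := id) hS (mem_transIdeal_self _) (Set.mem_insert _ _)
        (Or.inr (cProd_mem hS hjb fun t h₁ h₂ => hz t (by omega) h₂))
  rcases hai.eq_or_lt with rfl | hai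
  · exact hright
  · obtain ⟨k, rfl⟩ : ∃ k, i = k + 1 := ⟨i - 1, by omega⟩
    rw [cProd_split z (Nat.le_of_lt_succ hai) (by omega : k < b)]
    exact comp_comp_mem_transIdeal (b := id) hS hright
      (Or.inr (cProd_mem hS (Nat.le_of_lt_succ hai) fun t h₁ h₂ => hz t h₁ (by omega)))
      (Set.mem_insert _ _)

lemma IsSandwiched.of_mem_transIdeal_cProd_of_lt_of_lt (hS : ∀ f ∈ S, ∀ g ∈ S, g ∘ f ∈ S)
    {z : ℕ → α → α} {x : α → α} {a i b : ℕ} (hz : ∀ t, a ≤ t → t ≤ b → z t ∈ S)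
    (hai : a < i) (hib : i < b) (hzi : z i = x) (h : x ∈ transIdeal S (cProd z a b)) :
    IsSandwiched S x := by
  obtain ⟨k, rfl⟩ : ∃ k, i = k + 1 := ⟨i - 1, by omega⟩
  have hk : cProd z k (k + 2) = z (k + 2) ∘ x ∘ z k := by
    rw [cProd_succ z (by omega), cProd_succ z le_rfl, cProd_self, hzi]
  refine IsSandwiched.of_mem_transIdeal hS (hz k (by omega) (by omega))
    (hz (k + 2) (by omega) (by omega)) ?_
  exact hk ▸ mem_transIdeal_trans hS h
    (cProd_mem_transIdeal hS hz (by omega) (by omega) (by omega))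

lemma IsSandwiched.of_mem_transIdeal_cProd_of_eq_of_eq (hS : ∀ f ∈ S, ∀ g ∈ S, g ∘ f ∈ S)
    {z : ℕ → α → α} {x : α → α} {a i j b : ℕ} (hx : x ∈ S)
    (hz : ∀ t, a ≤ t → t ≤ b → z t ∈ S) (hai : a ≤ i) (hij : i < j) (hjb : j ≤ b)
    (hzi : z i = x) (hzj : z j = x) (h : x ∈ transIdeal S (cProd z a b)) :
    IsSandwiched S x := by
  have htail : cProd z (i + 1) j ∈ transIdeal S x := by
    simpa only [cProd_self, hzj] using
      cProd_mem_transIdeal hS (fun t h₁ h₂ => hz t (by omega) (by omega)) hij le_rfl le_rfl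
  obtain ⟨p, hp, q, hq, htail_eq⟩ := mem_transIdeal_iff.mp htail
  have hij_mem : cProd z i j ∈ transIdeal S (x ∘ p ∘ x) := by
    rw [cProd_split z le_rfl hij, cProd_self, hzi, htail_eq]
    exact comp_comp_mem_transIdeal (h := x ∘ p ∘ x) (a := id) hS (mem_transIdeal_self _)
      (Set.mem_insert _ _) hq
  exact IsSandwiched.of_mem_transIdeal_comp_comp hS hx hp <| mem_transIdeal_trans hS h <|
    mem_transIdeal_trans hS (cProd_mem_transIdeal hS hz hai hij.le hjb) hij_mem

end Products

lemma trank_le_of_mem_transIdeal {n : ℕ} {S : Set (Fin n → Fin n)} {h x : Fin n → Fin n}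
    (hh : h ∈ transIdeal S x) : trank h ≤ trank x := by
  obtain ⟨a, -, b, -, rfl⟩ := mem_transIdeal_iff.mp hh
  unfold trank
  calc (Finset.univ.image (b ∘ x ∘ a)).card
      = ((Finset.univ.image a).image x |>.image b).card := by simp only [Finset.image_image]
    _ ≤ ((Finset.univ.image a).image x).card := Finset.card_image_le
    _ ≤ (Finset.univ.image x).card :=
      Finset.card_le_card (Finset.image_subset_image (Finset.subset_univ _))

namespace SgClosure

variable {α : Type*} {X : Set (α → α)}

lemma comp_mem : ∀ f ∈ {f | SgClosure X f}, ∀ g ∈ {f | SgClosure X f},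
    g ∘ f ∈ {f | SgClosure X f} :=
  fun _ hf _ hg => comp hf hg

lemma exists_first_factor {s : α → α} (hs : SgClosure X s) :
    ∃ y ∈ X, ∃ w ∈ insert id {f | SgClosure X f}, s = w ∘ y := by
  induction hs with
  | base h => exact ⟨_, h, id, Set.mem_insert _ _, rfl⟩
  | @comp f g _ hg ihf _ =>
    obtain ⟨y, hy, w, hw, rfl⟩ := ihf
    exact ⟨y, hy, g ∘ w, Or.inr (comp_mem_of_outer_mem comp_mem hw hg), rfl⟩

lemma exists_last_factor {s : α → α} (hs : SgClosure X s) :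
    ∃ y ∈ X, ∃ w ∈ insert id {f | SgClosure X f}, s = y ∘ w := by
  induction hs with
  | base h => exact ⟨_, h, id, Set.mem_insert _ _, rfl⟩
  | @comp f g hf _ _ ihg =>
    obtain ⟨y, hy, w, hw, rfl⟩ := ihg
    exact ⟨y, hy, w ∘ f, Or.inr (comp_mem_of_inner_mem comp_mem hf hw), rfl⟩

end SgClosure

theorem not_isSandwiched {n : ℕ} {X : Set (Fin n → Fin n)} {x : Fin n → Fin n} (hx : x ∈ X)
    (hrank : ∀ y₁ ∈ X, ∀ y₂ ∈ X, JLE {f | SgClosure X f} x y₁ → JLE {f | SgClosure X f} x y₂ →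
      trank (y₂ ∘ x ∘ y₁) < trank x) :
    ¬ IsSandwiched {f | SgClosure X f} x := by
  rintro ⟨a, ha, b, hb, hxeq⟩
  obtain ⟨y₁, hy₁, w₁, hw₁, rfl⟩ := SgClosure.exists_last_factor ha
  obtain ⟨y₂, hy₂, w₂, hw₂, rfl⟩ := SgClosure.exists_first_factor hb
  have hxS : SgClosure X x := .base hx
  have hy₁J : x ∈ transIdeal {f | SgClosure X f} y₁ := mem_transIdeal_iff.mpr
    ⟨w₁, hw₁, w₂ ∘ y₂ ∘ x,
      Or.inr (comp_mem_of_inner_mem SgClosure.comp_mem (.comp hxS (.base hy₂)) hw₂), hxeq⟩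
  have hy₂J : x ∈ transIdeal {f | SgClosure X f} y₂ := mem_transIdeal_iff.mpr
    ⟨x ∘ y₁ ∘ w₁, Or.inr (comp_mem_of_outer_mem SgClosure.comp_mem
      (comp_mem_insert_id SgClosure.comp_mem hw₁ (Or.inr (.base hy₁))) hxS), w₂, hw₂, hxeq⟩
  have hle : trank x ≤ trank (y₂ ∘ x ∘ y₁) :=
    trank_le_of_mem_transIdeal (S := {f | SgClosure X f})
      (mem_transIdeal_iff.mpr ⟨w₁, hw₁, w₂, hw₂, hxeq⟩)
  exact (hle.trans_lt <| hrank y₁ hy₁ y₂ hy₂ (JLE_of_mem_transIdeal SgClosure.comp_mem hy₁J)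
    (JLE_of_mem_transIdeal SgClosure.comp_mem hy₂J)).false

theorem stmt_7_general {n : ℕ} (S : Set (Fin n → Fin n))
    (X : Set (Fin n → Fin n)) (hXgen : {f | SgClosure X f} = S)
    (x : Fin n → Fin n) (hx : x ∈ X)
    (hrank : ∀ y₁ ∈ X, ∀ y₂ ∈ X, JLE S x y₁ → JLE S x y₂ →
      trank (y₂ ∘ x ∘ y₁) < trank x)
    (m : ℕ) (z : ℕ → Fin n → Fin n)
    (hz : ∀ i, 1 ≤ i → i ≤ m → z i ∈ X)
    (hJ : transIdeal S (cProd z 1 m) = transIdeal S x) :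
    (∀ i, 1 ≤ i → i ≤ m → JLE S x (z i)) ∧
    (∀ i j, 1 ≤ i → i ≤ m → 1 ≤ j → j ≤ m → z i = x → z j = x → i = j) ∧
    (∀ i, 1 ≤ i → i ≤ m → z i = x → i = 1 ∨ i = m) := by
  subst hXgen
  have hS := @SgClosure.comp_mem _ X
  have hzS : ∀ t, 1 ≤ t → t ≤ m → SgClosure X (z t) := fun t h₁ h₂ => .base (hz t h₁ h₂)
  have hxJ : x ∈ transIdeal _ (cProd z 1 m) := hJ ▸ mem_transIdeal_self x
  have hx_not := not_isSandwiched hx hrank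
  refine ⟨fun i hi₁ him => ?_, fun i j hi₁ him hj₁ hjm hzi hzj => ?_, fun i hi₁ him hzi => ?_⟩
  · refine JLE_of_mem_transIdeal hS (mem_transIdeal_trans hS hxJ ?_)
    simpa only [cProd_self] using cProd_mem_transIdeal hS hzS hi₁ le_rfl him
  · by_contra hij
    rcases Ne.lt_or_gt hij with hlt | hlt
    · exact hx_not (.of_mem_transIdeal_cProd_of_eq_of_eq hS (.base hx) hzS hi₁ hlt hjm hzi hzj hxJ)
    · exact hx_not (.of_mem_transIdeal_cProd_of_eq_of_eq hS (.base hx) hzS hj₁ hlt him hzj hzi hxJ)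
  · by_contra hi
    exact hx_not (.of_mem_transIdeal_cProd_of_lt_of_lt hS hzS (by omega) (by omega) hzi hxJ)

/-- Suppose `S ≤ T_n` is generated by `X`, and `x ∈ X` satisfies
`rank (y₁ x y₂) < rank x` for all `y₁, y₂ ∈ X` with `y₁, y₂ ≥_J x`. If a
product `z 1 ⋯ z m` of elements of `X` is `J`-equivalent to `x`, then every
factor lies `≥_J x`, the element `x` occurs at most once among the factors,
and if it occurs then only as the first or the last factor. -/
theorem stmt_7 {n : ℕ} (S : Set (Fin n → Fin n))
    (hS : ∀ f ∈ S, ∀ g ∈ S, g ∘ f ∈ S)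
    (X : Set (Fin n → Fin n)) (hXgen : {f | SgClosure X f} = S)
    (x : Fin n → Fin n) (hx : x ∈ X)
    (hrank : ∀ y₁ ∈ X, ∀ y₂ ∈ X, JLE S x y₁ → JLE S x y₂ →
      trank (y₂ ∘ x ∘ y₁) < trank x)
    (m : ℕ) (hm : 1 ≤ m) (z : ℕ → Fin n → Fin n)
    (hz : ∀ i, 1 ≤ i → i ≤ m → z i ∈ X)
    (hJ : transIdeal S (cProd z 1 m) = transIdeal S x) :
    (∀ i, 1 ≤ i → i ≤ m → JLE S x (z i)) ∧
    (∀ i j, 1 ≤ i → i ≤ m → 1 ≤ j → j ≤ m → z i = x → z j = x → i = j) ∧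
    (∀ i, 1 ≤ i → i ≤ m → z i = x → i = 1 ∨ i = m) :=
  stmt_7_general S X hXgen x hx hrank m z hz hJ
end

section
/- For every n ≥ 1, the number of transformations f ∈ T_n that are injective on their own image (equivalently, for which ⟨f⟩ is a group) equals ∑_{r=1}^{n} C(n,r)·r^{n−r}·r!, and this number also equals ∑_{k=0}^{n−1} (n−k)^k · n!/k!. Consequently, the probability G_n that a uniformly random f ∈ T_n generates a group is G_n = (n!/n^n)·∑_{k=0}^{n−1} (n−k)^k/k!. -/
/-!
A map `f` that is injective on its image `R` permutes `R`; conversely, if `range f ⊆ S` and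
`f` is injective on the finite set `S`, then `f` maps `S` onto itself, so `range f = S`.
Hence the maps with image `S` are a permutation of `S` together with an arbitrary map
`Sᶜ → S`, and there are `|S|^(n-|S|)·|S|!` of them. Summing over `S` by size gives the first
formula; substituting `k = n - r` and using `C(n,r)·r! = n!/(n-r)!` gives the second.
-/

noncomputable def groupGenCount (n : ℕ) : ℕ :=
  Nat.card {f : Fin n → Fin n // Set.InjOn f (Set.range f)}

open Finset

variable {α : Type*}

theorem injOn_range_and_range_eq_iff {f : α → α} {S : Finset α} :
    (Set.InjOn f (Set.range f) ∧ Set.range f = S) ↔ Set.range f ⊆ S ∧ Set.InjOn f S := by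
  constructor
  · rintro ⟨hinj, hrange⟩
    exact ⟨hrange.subset, hrange ▸ hinj⟩
  · rintro ⟨hsub, hinj⟩
    have hbij := (S.finite_toSet.injOn_iff_bijOn_of_mapsTo
      fun x _ => hsub (Set.mem_range_self x)).mp hinj
    have hrange : Set.range f = S := hsub.antisymm hbij.surjOn.subset_range
    exact ⟨hrange ▸ hinj, hrange⟩

variable [Fintype α] [DecidableEq α]

def rangeSubsetInjOnEquiv (S : Finset α) :
    {f : α → α // Set.range f ⊆ S ∧ Set.InjOn f S} ≃ (↥Sᶜ → ↥S) × (↥S ↪ ↥S) where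
  toFun f :=
    have hmem (x : α) : f.1 x ∈ S := f.2.1 (Set.mem_range_self x)
    (fun x => ⟨f.1 x, hmem x⟩,
      ⟨fun s => ⟨f.1 s, hmem s⟩,
        fun a b hab => Subtype.ext (f.2.2 a.2 b.2 (congrArg Subtype.val hab))⟩)
  invFun p := ⟨fun x => if hx : x ∈ S then p.2 ⟨x, hx⟩ else p.1 ⟨x, mem_compl.mpr hx⟩,
    Set.range_subset_iff.mpr fun x => by by_cases hx : x ∈ S <;> simp [hx],
    fun a ha b hb hab => by
      simp only [mem_coe] at ha hb
      simpa [ha, hb, Subtype.val_inj] using hab⟩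
  left_inv f := by ext x; dsimp only; split <;> rfl
  right_inv p := by
    refine Prod.ext (funext fun x => ?_) (Function.Embedding.ext fun s => ?_)
    · simp [mem_compl.mp x.2]
    · simp

theorem card_range_subset_injOn (S : Finset α) :
    Nat.card {f : α → α // Set.range f ⊆ S ∧ Set.InjOn f S}
      = #S ^ (Fintype.card α - #S) * (#S).factorial := by
  rw [Nat.card_congr (rangeSubsetInjOnEquiv S), Nat.card_eq_fintype_card, Fintype.card_prod, Fintype.card_fun,
    Fintype.card_embedding_eq, Fintype.card_coe, Fintype.card_coe, card_compl,
    Nat.descFactorial_self]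

theorem card_injOn_range_eq_sum :
    Nat.card {f : α → α // Set.InjOn f (Set.range f)}
      = ∑ r ∈ range (Fintype.card α + 1),
          (Fintype.card α).choose r * r ^ (Fintype.card α - r) * r.factorial := by
  classical
  rw [Nat.card_eq_fintype_card, Fintype.card_subtype, card_eq_sum_card_fiberwise
    (f := fun f => univ.image f) (t := univ.powerset) fun f _ => mem_powerset.mpr (subset_univ _)]
  have hfiber (S : Finset α) :
      #{f ∈ ({f | Set.InjOn f (Set.range f)} : Finset (α → α)) | univ.image f = S}
        = #S ^ (Fintype.card α - #S) * (#S).factorial := by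
    rw [filter_filter, ← card_range_subset_injOn, Nat.card_eq_fintype_card, Fintype.card_subtype]
    congr 1
    refine filter_congr fun f _ => ?_
    rw [← injOn_range_and_range_eq_iff, ← coe_inj, coe_image, coe_univ, Set.image_univ]
  rw [sum_congr rfl fun S _ => hfiber S,
    sum_powerset_apply_card fun r => r ^ (Fintype.card α - r) * r.factorial, card_univ]
  simp only [smul_eq_mul, mul_assoc]

theorem choose_mul_pow_mul_factorial_eq {n r : ℕ} (h : r ≤ n) :
    (n.choose r * r ^ (n - r) * r.factorial : ℝ)
      = ((n - (n - r) : ℕ) : ℝ) ^ (n - r) * n.factorial / (n - r).factorial := by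
  rw [Nat.sub_sub_self h, Nat.cast_choose ℝ h]
  field_simp

/-- The number of `f ∈ T_n` injective on their image equals
`∑_{r=1}^{n} C(n,r)·r^{n−r}·r!`, also equals `∑_{k=0}^{n−1} (n−k)^k·n!/k!`, and
hence the probability `G_n` that a uniformly random `f ∈ T_n` generates a group
is `(n!/n^n)·∑_{k=0}^{n−1} (n−k)^k/k!`. -/
theorem stmt_10 (n : ℕ) (hn : 1 ≤ n) :
    (groupGenCount n
        = ∑ r ∈ Finset.Icc 1 n, n.choose r * r ^ (n - r) * r.factorial) ∧
    ((groupGenCount n : ℝ)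
        = ∑ k ∈ Finset.range n, ((n - k : ℕ) : ℝ) ^ k * n.factorial / k.factorial) ∧
    ((groupGenCount n : ℝ) / (n : ℝ) ^ n
        = ((n.factorial : ℝ) / (n : ℝ) ^ n) *
            ∑ k ∈ Finset.range n, ((n - k : ℕ) : ℝ) ^ k / k.factorial) := by
  have hcount : groupGenCount n
      = ∑ r ∈ Icc 1 n, n.choose r * r ^ (n - r) * r.factorial := by
    rw [groupGenCount, card_injOn_range_eq_sum, Fintype.card_fin, sum_range_succ',
      ← Ico_add_one_right_eq_Icc, sum_Ico_eq_sum_range]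
    simp [zero_pow (by omega : n ≠ 0), add_comm]
  have hreal : (groupGenCount n : ℝ)
      = ∑ k ∈ range n, ((n - k : ℕ) : ℝ) ^ k * n.factorial / k.factorial := by
    rw [hcount, Nat.cast_sum, sum_congr rfl fun r hr => by
      push_cast; exact choose_mul_pow_mul_factorial_eq (mem_Icc.mp hr).2]
    rw [← Ico_add_one_right_eq_Icc, range_eq_Ico,
      sum_Ico_reflect (fun k => ((n - k : ℕ) : ℝ) ^ k * n.factorial / k.factorial) 1 le_rfl]
    simp
  refine ⟨hcount, hreal, ?_⟩
  rw [hreal, mul_sum, sum_div]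
  exact sum_congr rfl fun k _ => by ring
end

section
/- For n ≥ 1 let G_n = n^{−n}·|{f ∈ T_n : f is injective on its image}| be the probability that a uniformly random f ∈ T_n generates a group. Then (log G_n)/n converges to Ω − 1 as n → ∞; in particular, since Ω − 1 < 0, the probability G_n tends to 0 exponentially fast. -/
open Finset Real Filter Topology
open scoped Nat

def groupGenCountOfRank (n k : ℕ) : ℕ := n.choose k * (k ! * k ^ (n - k))

theorem groupGenCountOfRank_pos {n k : ℕ} (hk : 0 < k) (hkn : k ≤ n) :
    0 < groupGenCountOfRank n k := by
  have := Nat.choose_pos hkn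
  unfold groupGenCountOfRank
  positivity

theorem groupGenCountOfRank_zero_right {n : ℕ} (hn : 0 < n) : groupGenCountOfRank n 0 = 0 := by
  simp [groupGenCountOfRank, hn.ne']

theorem groupGenCountOfRank_mul_factorial {n k : ℕ} (hk : k ≤ n) :
    groupGenCountOfRank n k * (n - k)! = n ! * k ^ (n - k) := by
  rw [groupGenCountOfRank, ← Nat.choose_mul_factorial_mul_factorial hk]
  ring

section PiecewisePerm

variable {α : Type*} [DecidableEq α]

def piecewisePerm (S : Finset α) (σ : Equiv.Perm S) (g : {x // x ∉ S} → S) : α → α :=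
  fun x => if h : x ∈ S then σ ⟨x, h⟩ else g ⟨x, h⟩

variable (S : Finset α) (σ : Equiv.Perm S) (g : {x // x ∉ S} → S)

theorem piecewisePerm_of_mem {x : α} (hx : x ∈ S) : piecewisePerm S σ g x = σ ⟨x, hx⟩ :=
  dif_pos hx

theorem piecewisePerm_of_notMem {x : α} (hx : x ∉ S) : piecewisePerm S σ g x = g ⟨x, hx⟩ :=
  dif_neg hx

theorem range_piecewisePerm : Set.range (piecewisePerm S σ g) = S := by
  refine Set.Subset.antisymm ?_ fun y hy => ⟨σ.symm ⟨y, hy⟩, ?_⟩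
  · rintro _ ⟨x, rfl⟩
    by_cases hx : x ∈ S
    · simp [piecewisePerm_of_mem S σ g hx]
    · simp [piecewisePerm_of_notMem S σ g hx]
  · rw [piecewisePerm_of_mem S σ g (σ.symm ⟨y, hy⟩).2]
    simp

theorem injOn_range_piecewisePerm :
    Set.InjOn (piecewisePerm S σ g) (Set.range (piecewisePerm S σ g)) := by
  rw [range_piecewisePerm]
  intro a ha b hb hab
  rw [piecewisePerm_of_mem S σ g ha, piecewisePerm_of_mem S σ g hb] at hab
  simpa using σ.injective (Subtype.ext hab)

theorem bijective_piecewisePerm [Fintype α] :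
    Function.Bijective fun p : Σ S : Finset α, Equiv.Perm S × ({x // x ∉ S} → S) =>
      (⟨piecewisePerm p.1 p.2.1 p.2.2, injOn_range_piecewisePerm p.1 p.2.1 p.2.2⟩ :
        {f : α → α // Set.InjOn f (Set.range f)}) := by
  constructor
  · rintro ⟨S, σ, g⟩ ⟨S', σ', g'⟩ h
    have hf : piecewisePerm S σ g = piecewisePerm S' σ' g' := congrArg Subtype.val h
    obtain rfl : S = S' := by
      have := range_piecewisePerm S σ g
      rw [hf, range_piecewisePerm] at this
      exact Finset.coe_injective this.symm
    obtain rfl : σ = σ' := Equiv.ext fun x => Subtype.ext <| by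
      simpa [piecewisePerm_of_mem S _ _ x.2] using congrFun hf x
    obtain rfl : g = g' := funext fun x => Subtype.ext <| by
      simpa [piecewisePerm_of_notMem S _ _ x.2] using congrFun hf x
    rfl
  · rintro ⟨f, hf⟩
    set S := (Set.range f).toFinset
    have hmem : ∀ x, f x ∈ S := by simp [S]
    have hinj : Function.Injective fun x : S => (⟨f x, hmem x⟩ : S) := fun a b hab =>
      Subtype.ext <| hf (by simpa [S] using a.2) (by simpa [S] using b.2)
        (congrArg Subtype.val hab)
    refine ⟨⟨S, Equiv.ofBijective _ (Finite.injective_iff_bijective.mp hinj),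
      fun x => ⟨f x, hmem x⟩⟩, Subtype.ext <| funext fun x => ?_⟩
    by_cases hx : x ∈ S
    · simp [piecewisePerm_of_mem S _ _ hx]
    · simp [piecewisePerm_of_notMem S _ _ hx]

end PiecewisePerm

theorem card_injOn_range {α : Type*} [Fintype α] :
    Nat.card {f : α → α // Set.InjOn f (Set.range f)} =
      ∑ k ∈ range (Fintype.card α + 1), groupGenCountOfRank (Fintype.card α) k := by
  classical
  rw [← Nat.card_eq_of_bijective _ bijective_piecewisePerm, Nat.card_eq_fintype_card,
    Fintype.card_sigma]
  simp only [Fintype.card_prod, Fintype.card_perm, Fintype.card_fun, Fintype.card_coe,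
    Fintype.card_subtype_compl]
  simpa [groupGenCountOfRank] using
    sum_powerset_apply_card (fun k => k ! * k ^ (Fintype.card α - k)) (x := univ)

theorem groupGenCount_eq_sum (n : ℕ) :
    groupGenCount n = ∑ k ∈ range (n + 1), groupGenCountOfRank n k := by
  simpa [groupGenCount] using card_injOn_range (α := Fin n)

theorem groupGenCount_pos (n : ℕ) : 0 < groupGenCount n :=
  have : Nonempty {f : Fin n → Fin n // Set.InjOn f (Set.range f)} := ⟨⟨id, Set.injOn_id _⟩⟩
  Nat.card_pos

theorem log_factorial_ge (n : ℕ) : n * log n - n ≤ log n ! := by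
  rcases Nat.eq_zero_or_pos n with rfl | hn
  · simp
  have h := pow_div_factorial_le_exp (n : ℝ) n.cast_nonneg n
  rw [div_le_iff₀ (by positivity)] at h
  have := log_le_log (by positivity) h
  rw [log_pow, log_mul (by positivity) (by positivity), log_exp] at this
  linarith

theorem log_factorial_le (n : ℕ) : log n ! ≤ n * log n - n + log n / 2 + 1 := by
  rcases n with _ | m
  · simp
  have h := Stirling.log_stirlingSeq'_antitone (Nat.zero_le m)
  simp only [Function.comp_apply, Nat.succ_eq_add_one, zero_add,
    Stirling.log_stirlingSeq_formula] at h
  rw [log_mul two_ne_zero (by positivity), log_div (by positivity) (by positivity), log_exp] at h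
  simp only [Nat.factorial_one, Nat.cast_one, log_one, mul_one, one_mul, one_div, log_inv,
    log_exp] at h
  linarith

theorem log_natCast_le_log_natCast {m n : ℕ} (h : m ≤ n) : log m ≤ log n := by
  rcases Nat.eq_zero_or_pos m with rfl | hm
  · simpa using log_natCast_nonneg n
  exact log_le_log (by positivity) (by exact_mod_cast h)

noncomputable def rankExponent (x : ℝ) : ℝ := (1 - x) * log (x / (1 - x)) - x

theorem natCast_mul_rankExponent {n k : ℕ} (hk : 0 < k) (hkn : k ≤ n) :
    n * rankExponent (k / n) = (n - k : ℕ) * (log k - log (n - k : ℕ)) - k := by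
  have hn : (n : ℝ) ≠ 0 := by have := hk.trans_le hkn; positivity
  rcases hkn.eq_or_lt with rfl | hlt
  · simp [rankExponent, hn]
  have hr : ((n - k : ℕ) : ℝ) = n - k := Nat.cast_sub hkn
  have hr0 : (n : ℝ) - k ≠ 0 := by
    rw [← hr]; exact_mod_cast (Nat.sub_pos_of_lt hlt).ne'
  have hdiv : (k : ℝ) / n / (1 - k / n) = k / (n - k) := by field_simp
  rw [rankExponent, hdiv, log_div (by positivity) hr0, hr]
  field_simp

theorem abs_log_groupGenCountOfRank_sub_le {n k : ℕ} (hk : 0 < k) (hkn : k ≤ n) :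
    |log (groupGenCountOfRank n k / (n : ℝ) ^ n) - n * rankExponent (k / n)| ≤
      log n / 2 + 1 := by
  have hn : 0 < n := hk.trans_le hkn
  have := groupGenCountOfRank_pos hk hkn
  have hlog : log (groupGenCountOfRank n k) + log (n - k)! = log n ! + (n - k : ℕ) * log k := by
    rw [← log_mul (by positivity) (by positivity), ← log_pow, ← log_mul (by positivity)
      (by positivity)]
    exact_mod_cast congrArg (fun m : ℕ => log m) (groupGenCountOfRank_mul_factorial hkn)
  have hr : ((n - k : ℕ) : ℝ) = n - k := Nat.cast_sub hkn
  rw [log_div (by positivity) (by positivity), log_pow, natCast_mul_rankExponent hk hkn, abs_le]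
  -- the difference is `s n - s (n - k)` with `s m = log m! - (m log m - m) ∈ [0, log m / 2 + 1]`
  have := log_factorial_ge n
  have := log_factorial_le n
  have := log_factorial_ge (n - k)
  have := log_factorial_le (n - k)
  have := log_natCast_le_log_natCast (Nat.sub_le n k)
  have := log_natCast_nonneg (n - k)
  constructor <;> nlinarith

theorem pos_of_mul_exp_eq_one {Ω : ℝ} (hΩ : Ω * exp Ω = 1) : 0 < Ω :=
  pos_of_mul_pos_left (hΩ ▸ one_pos) (exp_pos Ω).le

theorem lt_one_of_mul_exp_eq_one {Ω : ℝ} (hΩ : Ω * exp Ω = 1) : Ω < 1 := by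
  have hΩpos := pos_of_mul_exp_eq_one hΩ
  nlinarith [one_lt_exp_iff.mpr hΩpos]

theorem log_eq_neg_of_mul_exp_eq_one {Ω : ℝ} (hΩ : Ω * exp Ω = 1) : log Ω = -Ω := by
  rw [← log_exp (-Ω), exp_neg, ← eq_inv_of_mul_eq_one_left hΩ]

theorem log_le_mul_add_of_mul_exp_eq_one {Ω y : ℝ} (hΩ : Ω * exp Ω = 1) (hy : 0 < y) :
    log y ≤ Ω * y + Ω - 1 := by
  have hΩpos := pos_of_mul_exp_eq_one hΩ
  have h := log_le_sub_one_of_pos (mul_pos hΩpos hy)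
  rw [log_mul hΩpos.ne' hy.ne', log_eq_neg_of_mul_exp_eq_one hΩ] at h
  linarith

theorem rankExponent_le {Ω x : ℝ} (hΩ : Ω * exp Ω = 1) (hx0 : 0 < x) (hx1 : x ≤ 1) :
    rankExponent x ≤ Ω - 1 := by
  rcases hx1.eq_or_lt with rfl | hx1
  · simpa [rankExponent] using (pos_of_mul_exp_eq_one hΩ).le
  have h := log_le_mul_add_of_mul_exp_eq_one hΩ (div_pos hx0 (sub_pos.mpr hx1))
  have h' := mul_le_mul_of_nonneg_left h (sub_pos.mpr hx1).le
  have : (1 - x) * (Ω * (x / (1 - x)) + Ω - 1) = Ω * x + (Ω - 1) * (1 - x) := by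
    field_simp [(sub_pos.mpr hx1).ne']; ring
  rw [rankExponent]
  linarith

theorem rankExponent_one_div_one_add {Ω : ℝ} (hΩ : Ω * exp Ω = 1) :
    rankExponent (1 / (1 + Ω)) = Ω - 1 := by
  have hΩpos := pos_of_mul_exp_eq_one hΩ
  have h : 1 / (1 + Ω) / (1 - 1 / (1 + Ω)) = Ω⁻¹ := by
    field_simp
    rw [add_sub_cancel_left, div_self hΩpos.ne']
  rw [rankExponent, h, log_inv, log_eq_neg_of_mul_exp_eq_one hΩ]
  field_simp
  ring

theorem continuousAt_rankExponent {x : ℝ} (hx0 : 0 < x) (hx1 : x < 1) :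
    ContinuousAt rankExponent x := by
  have : 1 - x ≠ 0 := (sub_pos.mpr hx1).ne'
  unfold rankExponent
  fun_prop (disch := positivity)

theorem le_log_groupGenCount_div {n k : ℕ} (hk : 0 < k) (hkn : k ≤ n) :
    n * rankExponent (k / n) - (log n / 2 + 1) ≤ log (groupGenCount n / (n : ℝ) ^ n) := by
  have hn : 0 < n := hk.trans_le hkn
  have hle : groupGenCountOfRank n k ≤ groupGenCount n := by
    rw [groupGenCount_eq_sum]
    exact single_le_sum (fun _ _ => Nat.zero_le _) (mem_range.mpr (Nat.lt_succ_of_le hkn))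
  have := groupGenCountOfRank_pos hk hkn
  calc _ ≤ log (groupGenCountOfRank n k / (n : ℝ) ^ n) := by
        linarith [(abs_le.mp (abs_log_groupGenCountOfRank_sub_le hk hkn)).1]
    _ ≤ _ := log_le_log (by positivity) (by gcongr)

theorem log_groupGenCount_div_le {Ω : ℝ} (hΩ : Ω * exp Ω = 1) {n : ℕ} (hn : 0 < n) :
    log (groupGenCount n / (n : ℝ) ^ n) ≤ n * (Ω - 1) + (log (n + 1) + log n / 2 + 1) := by
  set M := exp (n * (Ω - 1) + (log n / 2 + 1))
  have hterm : ∀ k ≤ n, (groupGenCountOfRank n k : ℝ) / n ^ n ≤ M := by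
    intro k hkn
    rcases Nat.eq_zero_or_pos k with rfl | hk
    · simp only [groupGenCountOfRank_zero_right hn, Nat.cast_zero, zero_div]
      positivity
    have := groupGenCountOfRank_pos hk hkn
    rw [← log_le_iff_le_exp (by positivity)]
    have hrate := rankExponent_le hΩ (x := k / n) (by positivity)
      (div_le_one_of_le₀ (by exact_mod_cast hkn) n.cast_nonneg)
    have := mul_le_mul_of_nonneg_left hrate n.cast_nonneg
    linarith [(abs_le.mp (abs_log_groupGenCountOfRank_sub_le hk hkn)).2]
  have hsum : (groupGenCount n : ℝ) / n ^ n ≤ (n + 1) * M := by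
    rw [groupGenCount_eq_sum, Nat.cast_sum, sum_div]
    calc _ ≤ ∑ _k ∈ range (n + 1), M :=
          sum_le_sum fun k hk => hterm k (Nat.lt_succ_iff.mp (mem_range.mp hk))
      _ = _ := by simp
  have := groupGenCount_pos n
  calc _ ≤ log ((n + 1) * M) := log_le_log (by positivity) hsum
    _ = _ := by rw [log_mul (by positivity) (by positivity), log_exp]; ring

theorem tendsto_log_add_one_add_log_div_two_add_one_div :
    Tendsto (fun n : ℕ => (log (n + 1) + log n / 2 + 1) / n) atTop (𝓝 0) := by
  have hlog : Tendsto (fun n : ℕ => log n / n) atTop (𝓝 0) := by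
    refine ((tendsto_pow_log_div_mul_add_atTop 1 0 1 one_ne_zero).comp
      tendsto_natCast_atTop_atTop).congr fun n => ?_
    simp
  have hlog_succ : Tendsto (fun n : ℕ => log (n + 1) / n) atTop (𝓝 0) := by
    refine ((tendsto_pow_log_div_mul_add_atTop 1 (-1) 1 one_ne_zero).comp
      (tendsto_natCast_atTop_atTop.comp (tendsto_add_atTop_nat 1))).congr fun n => ?_
    simp
  simpa [add_div, div_right_comm] using
    (hlog_succ.add (hlog.div_const 2)).add tendsto_one_div_atTop_nhds_zero_nat

theorem stmt_12_general (Ω : ℝ) (hΩ : Ω * Real.exp Ω = 1) :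
    Filter.Tendsto
      (fun n : ℕ =>
        Real.log ((groupGenCount n : ℝ) / (n : ℝ) ^ n) / (n : ℝ))
      Filter.atTop (nhds (Ω - 1)) ∧ Ω - 1 < 0 := by
  refine ⟨?_, sub_neg.mpr (lt_one_of_mul_exp_eq_one hΩ)⟩
  have hΩpos := pos_of_mul_exp_eq_one hΩ
  have hc0 : 0 < 1 / (1 + Ω) := by positivity
  have hc1 : 1 / (1 + Ω) < 1 := by rw [div_lt_one (by linarith)]; linarith
  set c := 1 / (1 + Ω)
  set k : ℕ → ℕ := fun n => ⌈c * n⌉₊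
  have hrate : Tendsto (fun n => rankExponent (k n / n)) atTop (𝓝 (Ω - 1)) :=
    rankExponent_one_div_one_add hΩ ▸ (continuousAt_rankExponent hc0 hc1).tendsto.comp
      ((tendsto_nat_ceil_mul_div_atTop hc0.le).comp tendsto_natCast_atTop_atTop)
  have herr := tendsto_log_add_one_add_log_div_two_add_one_div
  refine tendsto_of_tendsto_of_tendsto_of_le_of_le' (by simpa using hrate.sub herr)
    (by simpa using herr.const_add (Ω - 1)) ?_ ?_
  all_goals filter_upwards [eventually_gt_atTop 0] with n hn
  · have hkn : k n ≤ n := Nat.ceil_le.mpr (by nlinarith)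
    have := le_log_groupGenCount_div (Nat.ceil_pos.mpr (by positivity)) hkn
    have := log_natCast_nonneg (n + 1)
    rw [sub_div' (by positivity), div_le_div_iff_of_pos_right (by positivity)]
    push_cast at this
    linarith
  · have := log_groupGenCount_div_le hΩ hn
    rw [add_div' _ _ _ (by positivity), div_le_div_iff_of_pos_right (by positivity)]
    linarith

/-- Let `G_n = n^{-n}·|{f ∈ T_n : f injective on its image}|` be the
probability that a uniformly random `f ∈ T_n` generates a group. Then
`(log G_n)/n → Ω − 1` as `n → ∞`, where `Ω` is the omega constant
(`Ω·e^Ω = 1`); in particular `Ω − 1 < 0`, so `G_n → 0` exponentially fast. -/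
theorem stmt_12 (Ω : ℝ) (hΩpos : 0 < Ω) (hΩ : Ω * Real.exp Ω = 1) :
    Filter.Tendsto
      (fun n : ℕ =>
        Real.log ((groupGenCount n : ℝ) / (n : ℝ) ^ n) / (n : ℝ))
      Filter.atTop (nhds (Ω - 1)) ∧ Ω - 1 < 0 :=
  stmt_12_general Ω hΩ
end

section
/- Let n, r, k ∈ ℕ with 1 ≤ k ≤ r ≤ n. Then ∑_{{A_1,…,A_r} ∈ A(n,r)} ∑_{B ⊆ {1,…,r}, |B| = k} ∏_{i ∈ B} |A_i| = ∑_{s=k}^{n+k−r} C(n,s)·S(n−s, r−k)·C(s,k)·k^{s−k}, where the outer sum on the left is over all partitions of {1,…,n} into r nonempty parts and the inner sum is over all k-element subsets B of the index set of parts. -/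
open scoped Classical

/-- The Stirling number of the second kind `S(m, j)`: the number of partitions
of an `m`-element set into `j` nonempty parts (`S(0,0) = 1`, `S(m,0) = 0` for
`m > 0`). -/
noncomputable def stirling2 (m j : ℕ) : ℕ :=
  Nat.card {𝒜 : Finset (Finset (Fin m)) // isPartitionInto 𝒜 j}

/-!
Swap the two sums. A `k`-set `ℬ` of blocks of a partition `𝒜` of `Fin n` is a partition of
`S = ⋃ ℬ` into `k` blocks, and the partitions `𝒜 ⊇ ℬ` correspond to the partitions of `Sᶜ` into
`r - k` blocks, of which there are `S(n - |S|, r - k)`. It remains to show that the partitions `ℬ`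
of `S` into `k` blocks satisfy `∑ ℬ, ∏ A ∈ ℬ, |A| = C(|S|, k) k ^ (|S| - k)`: the product counts
the transversals `R` of `ℬ` (sets meeting every block exactly once), and for a fixed `k`-set
`R ⊆ S` the partitions of `S` with transversal `R` are exactly the fibre partitions of the
retractions of `S` onto `R`, of which there are `k ^ (|S| - k)`. Grouping the sets `S` by size
produces the factor `C(n, s)`.
-/

open Finset

section Transversals

variable {α : Type*} [DecidableEq α]

def transversals (ℬ : Finset (Finset α)) : Finset (Finset α) :=
  {R ∈ (ℬ.biUnion id).powerset | ∀ A ∈ ℬ, #(R ∩ A) = 1}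

variable {ℬ : Finset (Finset α)} {R : Finset α}

lemma mem_transversals : R ∈ transversals ℬ ↔ R ⊆ ℬ.biUnion id ∧ ∀ A ∈ ℬ, #(R ∩ A) = 1 := by
  rw [transversals, mem_filter, mem_powerset]

lemma card_transversals_insert {A₀ : Finset α} (hA₀ : ∀ A ∈ ℬ, Disjoint A₀ A) :
    #(transversals (insert A₀ ℬ)) = #A₀ * #(transversals ℬ) := by
  have hD : Disjoint A₀ (ℬ.biUnion id) := disjoint_biUnion_right _ _ _ |>.2 hA₀
  have hnot {x R} (hx : x ∈ A₀) (hR : R ∈ transversals ℬ) : x ∉ R := fun hxR =>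
    disjoint_left.1 hD hx ((mem_transversals.1 hR).1 hxR)
  rw [← card_product]
  refine (card_nbij (fun p => insert p.1 p.2) (fun p hp => ?_) ?_ fun R hR => ?_).symm
  · obtain ⟨hx, hR⟩ := mem_product.1 hp
    obtain ⟨hRsub, hRcard⟩ := mem_transversals.1 hR
    refine mem_transversals.2 ⟨?_, forall_mem_insert _ _ _ |>.2 ⟨?_, fun A hA => ?_⟩⟩
    · rw [biUnion_insert]
      exact insert_subset (mem_union_left _ hx) (hRsub.trans subset_union_right)
    · rw [insert_inter_of_mem hx, disjoint_iff_inter_eq_empty.1 (hD.symm.mono_left hRsub),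
        insert_empty, card_singleton]
    · rw [insert_inter_of_notMem (disjoint_left.1 (hA₀ A hA) hx), hRcard A hA]
  · rintro ⟨x, R⟩ hp ⟨y, S⟩ hq (hxRyS : insert x R = insert y S)
    obtain ⟨hx, hR⟩ : x ∈ A₀ ∧ R ∈ transversals ℬ := mem_product.1 hp
    obtain ⟨-, hS⟩ : y ∈ A₀ ∧ S ∈ transversals ℬ := mem_product.1 hq
    obtain rfl : x = y := (mem_insert.1 (hxRyS ▸ mem_insert_self x R)).resolve_right (hnot hx hS)
    rw [← erase_insert (hnot hx hR), hxRyS, erase_insert (hnot hx hS)]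
  · obtain ⟨hRsub, hRcard⟩ := mem_transversals.1 hR
    obtain ⟨x, hx⟩ := card_eq_one.1 (hRcard A₀ (mem_insert_self _ _))
    have hxR : x ∈ R ∩ A₀ := hx ▸ mem_singleton_self x
    refine ⟨(x, R \ A₀), mem_product.2 ⟨(mem_inter.1 hxR).2,
      mem_transversals.2 ⟨?_, fun A hA => ?_⟩⟩, ?_⟩
    · rw [biUnion_insert] at hRsub
      exact sdiff_le_iff.2 hRsub
    · rw [sdiff_inter_right_comm,
        sdiff_eq_self_of_disjoint ((hA₀ A hA).symm.mono_left inter_subset_right),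
        hRcard A (mem_insert_of_mem hA)]
    · show insert x (R \ A₀) = R
      rw [insert_eq, ← hx]
      exact sup_inf_sdiff R A₀

lemma card_transversals (hℬ : (ℬ : Set (Finset α)).PairwiseDisjoint id) :
    #(transversals ℬ) = ∏ A ∈ ℬ, #A := by
  induction ℬ using Finset.induction_on with
  | empty => simp [transversals]
  | insert A₀ ℬ hA₀ ih =>
    rw [coe_insert, Set.pairwiseDisjoint_insert_of_notMem (mem_coe.not.2 hA₀)] at hℬ
    rw [prod_insert hA₀, card_transversals_insert (A₀ := A₀) hℬ.2, ih hℬ.1]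

lemma card_eq_card_of_mem_transversals (hℬ : (ℬ : Set (Finset α)).PairwiseDisjoint id)
    (hR : R ∈ transversals ℬ) : #R = #ℬ := by
  obtain ⟨hRsub, hRcard⟩ := mem_transversals.1 hR
  rw [← inter_eq_left.2 hRsub, inter_biUnion, card_biUnion (hℬ.mono fun A => inter_subset_right),
    card_eq_sum_ones]
  exact sum_congr rfl hRcard

lemma eq_of_mem_transversals (hR : R ∈ transversals ℬ) {A : Finset α} (hA : A ∈ ℬ) {r r' : α}
    (hr : r ∈ R) (hr' : r' ∈ R) (hrA : r ∈ A) (hr'A : r' ∈ A) : r = r' :=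
  card_le_one.1 ((mem_transversals.1 hR).2 A hA).le r (mem_inter.2 ⟨hr, hrA⟩) r'
    (mem_inter.2 ⟨hr', hr'A⟩)

lemma exists_mem_of_mem_transversals (hR : R ∈ transversals ℬ) {A : Finset α} (hA : A ∈ ℬ) :
    ∃ r ∈ R, r ∈ A := by
  obtain ⟨r, hr⟩ := card_pos.1 (((mem_transversals.1 hR).2 A hA).symm ▸ one_pos)
  exact ⟨r, mem_inter.1 hr⟩

noncomputable def retractionOf (ℬ : Finset (Finset α)) (R : Finset α) (x : α) : α :=
  if h : ∃ r ∈ R, ∃ A ∈ ℬ, x ∈ A ∧ r ∈ A then h.choose else x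

lemma retractionOf_eq_iff (hℬ : (ℬ : Set (Finset α)).PairwiseDisjoint id)
    (hR : R ∈ transversals ℬ) {A : Finset α} (hA : A ∈ ℬ) {x r : α} (hxA : x ∈ A) (hr : r ∈ R) :
    retractionOf ℬ R x = r ↔ r ∈ A := by
  obtain ⟨r₀, hr₀, hr₀A⟩ := exists_mem_of_mem_transversals hR hA
  have h : ∃ r ∈ R, ∃ A ∈ ℬ, x ∈ A ∧ r ∈ A := ⟨r₀, hr₀, A, hA, hxA, hr₀A⟩
  obtain ⟨hR', A', hA', hxA', hA'r⟩ := h.choose_spec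
  obtain rfl := hℬ.elim_finset hA' hA x hxA' hxA
  rw [retractionOf, dif_pos h]
  exact ⟨fun h => h ▸ hA'r, fun hrA => eq_of_mem_transversals hR hA' hR' hr hA'r hrA⟩

lemma retractionOf_of_notMem {x : α} (hx : x ∉ ℬ.biUnion id) : retractionOf ℬ R x = x :=
  dif_neg fun ⟨_, _, A, hA, hxA, _⟩ => hx (mem_biUnion.2 ⟨A, hA, hxA⟩)

end Transversals

section Partitions

variable {α β : Type*} [Fintype α] [DecidableEq α]

noncomputable def partitionsOf (S : Finset α) (j : ℕ) : Finset (Finset (Finset α)) :=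
  {𝒜 | #𝒜 = j ∧ (∀ A ∈ 𝒜, A.Nonempty) ∧ (𝒜 : Set (Finset α)).PairwiseDisjoint id ∧
    𝒜.biUnion id = S}

variable {S : Finset α} {j : ℕ} {𝒜 : Finset (Finset α)}

@[simp]
lemma mem_partitionsOf : 𝒜 ∈ partitionsOf S j ↔ #𝒜 = j ∧ (∀ A ∈ 𝒜, A.Nonempty) ∧
    (𝒜 : Set (Finset α)).PairwiseDisjoint id ∧ 𝒜.biUnion id = S := by
  simp [partitionsOf]

lemma isPartitionInto_iff : isPartitionInto 𝒜 j ↔ 𝒜 ∈ partitionsOf univ j := by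
  simp only [isPartitionInto, mem_partitionsOf, eq_univ_iff_forall, mem_biUnion, id]
  rfl

lemma card_le_of_mem_partitionsOf (h𝒜 : 𝒜 ∈ partitionsOf S j) : j ≤ #S := by
  obtain ⟨rfl, hne, hdisj, rfl⟩ := mem_partitionsOf.1 h𝒜
  exact card_le_card_biUnion hdisj hne

lemma image_mem_partitionsOf_image_iff [Fintype β] [DecidableEq β] {f : α → β}
    (hf : f.Injective) :
    𝒜.image (image f) ∈ partitionsOf (S.image f) j ↔ 𝒜 ∈ partitionsOf S j := by
  have hinj : (image f).Injective := image_injective hf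
  simp only [mem_partitionsOf, card_image_of_injective _ hinj, forall_mem_image, image_nonempty,
    coe_image, hinj.injOn.pairwiseDisjoint_image, image_biUnion]
  have hdisj : (𝒜 : Set (Finset α)).PairwiseDisjoint (id ∘ image f) ↔
      (𝒜 : Set (Finset α)).PairwiseDisjoint id := by
    simp only [Set.PairwiseDisjoint, Set.Pairwise, Function.onFun, Function.comp, id,
      disjoint_image hf]
  rw [hdisj, ← hinj.eq_iff, biUnion_image]
  rfl

lemma card_partitionsOf_image [Fintype β] [DecidableEq β] {f : α → β} (hf : f.Injective)
    (S : Finset α) (j : ℕ) : #(partitionsOf (S.image f) j) = #(partitionsOf S j) := by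
  refine (card_nbij (image (image f)) (fun 𝒜 h => (image_mem_partitionsOf_image_iff hf).2 h)
    (image_injective (image_injective hf)).injOn fun ℬ hℬ => ?_).symm
  have hsub : ℬ ⊆ S.powerset.image (image f) := by
    rw [← powerset_image]
    intro X hX
    rw [mem_powerset, ← (mem_partitionsOf.1 hℬ).2.2.2]
    exact subset_biUnion_of_mem id hX
  obtain ⟨𝒜, -, rfl⟩ := subset_image_iff.1 hsub
  exact ⟨𝒜, (image_mem_partitionsOf_image_iff hf).1 hℬ, rfl⟩

lemma stirling2_eq_card (m j : ℕ) : stirling2 m j = #(partitionsOf (univ : Finset (Fin m)) j) := by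
  rw [stirling2, Nat.card_eq_fintype_card, Fintype.card_subtype]
  simp only [isPartitionInto_iff, filter_mem_eq_inter, univ_inter]

lemma card_partitionsOf (S : Finset α) (j : ℕ) : #(partitionsOf S j) = stirling2 #S j := by
  have hS : (univ : Finset S).image Subtype.val = S := by simp
  rw [stirling2_eq_card, ← image_univ_of_surjective S.equivFin.surjective,
    card_partitionsOf_image S.equivFin.injective, ← card_partitionsOf_image Subtype.val_injective,
    hS]

lemma stirling2_eq_zero_of_lt {m j : ℕ} (h : m < j) : stirling2 m j = 0 := by
  rw [stirling2_eq_card, card_eq_zero, eq_empty_iff_forall_notMem]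
  intro 𝒜 h𝒜
  have := card_le_of_mem_partitionsOf h𝒜
  rw [card_univ, Fintype.card_fin] at this
  omega

lemma subset_of_mem_partitionsOf {A : Finset α} (h𝒜 : 𝒜 ∈ partitionsOf S j) (hA : A ∈ 𝒜) :
    A ⊆ S :=
  (mem_partitionsOf.1 h𝒜).2.2.2 ▸ subset_biUnion_of_mem id hA

lemma disjoint_of_mem_partitionsOf {T : Finset α} {i : ℕ} {𝒞 : Finset (Finset α)}
    (h𝒞 : 𝒞 ∈ partitionsOf T i) (h𝒜 : 𝒜 ∈ partitionsOf S j) (hTS : Disjoint T S) :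
    Disjoint 𝒞 𝒜 := by
  refine disjoint_left.2 fun A hA𝒞 hA𝒜 => ?_
  obtain ⟨x, hx⟩ := (mem_partitionsOf.1 h𝒞).2.1 A hA𝒞
  exact disjoint_left.1 hTS (subset_of_mem_partitionsOf h𝒞 hA𝒞 hx)
    (subset_of_mem_partitionsOf h𝒜 hA𝒜 hx)

lemma union_mem_partitionsOf {T : Finset α} {i : ℕ} {𝒞 : Finset (Finset α)}
    (h𝒞 : 𝒞 ∈ partitionsOf T i) (h𝒜 : 𝒜 ∈ partitionsOf S j) (hTS : Disjoint T S) :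
    𝒞 ∪ 𝒜 ∈ partitionsOf (T ∪ S) (i + j) := by
  have hdisj := disjoint_of_mem_partitionsOf h𝒞 h𝒜 hTS
  obtain ⟨rfl, hne𝒞, hpd𝒞, rfl⟩ := mem_partitionsOf.1 h𝒞
  obtain ⟨rfl, hne𝒜, hpd𝒜, rfl⟩ := mem_partitionsOf.1 h𝒜
  refine mem_partitionsOf.2 ⟨card_union_of_disjoint hdisj, ?_, ?_, union_biUnion⟩
  · simpa only [mem_union, or_imp, forall_and] using ⟨hne𝒞, hne𝒜⟩
  · rw [coe_union, Set.pairwiseDisjoint_union]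
    exact ⟨hpd𝒞, hpd𝒜, fun A hA B hB _ =>
      hTS.mono (subset_biUnion_of_mem id hA) (subset_biUnion_of_mem id hB)⟩

lemma sdiff_mem_partitionsOf {ℬ : Finset (Finset α)} (h𝒜 : 𝒜 ∈ partitionsOf S j)
    (hℬ : ℬ ⊆ 𝒜) : 𝒜 \ ℬ ∈ partitionsOf (S \ ℬ.biUnion id) (j - #ℬ) := by
  obtain ⟨rfl, hne, hpd, rfl⟩ := mem_partitionsOf.1 h𝒜
  have hdisj : Disjoint ((𝒜 \ ℬ).biUnion id) (ℬ.biUnion id) := by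
    simp only [disjoint_biUnion_left, disjoint_biUnion_right, mem_sdiff]
    exact fun B hB A hA => hpd (mem_coe.2 hA.1) (mem_coe.2 (hℬ hB)) fun h => hA.2 (h ▸ hB)
  refine mem_partitionsOf.2 ⟨card_sdiff_of_subset hℬ, fun A hA => hne A (mem_sdiff.1 hA).1,
    hpd.subset (coe_subset.2 sdiff_subset), ?_⟩
  conv_rhs => rw [← sdiff_union_of_subset hℬ, union_biUnion, union_sdiff_cancel_right hdisj]

lemma mem_partitionsOf_biUnion_of_subset {ℬ : Finset (Finset α)} (h𝒜 : 𝒜 ∈ partitionsOf S j)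
    (hℬ : ℬ ⊆ 𝒜) : ℬ ∈ partitionsOf (ℬ.biUnion id) #ℬ := by
  obtain ⟨-, hne, hpd, -⟩ := mem_partitionsOf.1 h𝒜
  exact mem_partitionsOf.2 ⟨rfl, fun A hA => hne A (hℬ hA), hpd.subset (coe_subset.2 hℬ), rfl⟩

lemma card_filter_superset_partitionsOf {m : ℕ} {ℬ : Finset (Finset α)}
    (hℬ : ℬ ∈ partitionsOf S j) (hjm : j ≤ m) :
    #{𝒜 ∈ partitionsOf univ m | ℬ ⊆ 𝒜} = #(partitionsOf Sᶜ (m - j)) := by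
  obtain ⟨hcard, -, -, hS⟩ := mem_partitionsOf.1 hℬ
  refine card_bij' (fun 𝒜 _ => 𝒜 \ ℬ) (fun 𝒞 _ => 𝒞 ∪ ℬ) (fun 𝒜 h𝒜 => ?_) (fun 𝒞 h𝒞 => ?_)
    (fun 𝒜 h𝒜 => sdiff_union_of_subset (mem_filter.1 h𝒜).2)
    (fun 𝒞 h𝒞 => union_sdiff_cancel_right <|
      disjoint_of_mem_partitionsOf h𝒞 hℬ disjoint_compl_left)
  · obtain ⟨h𝒜, hℬ𝒜⟩ := mem_filter.1 h𝒜
    simpa only [hcard, hS, ← compl_eq_univ_sdiff] using sdiff_mem_partitionsOf h𝒜 hℬ𝒜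
  · have := union_mem_partitionsOf h𝒞 hℬ disjoint_compl_left
    rw [union_comm, union_compl, Nat.sub_add_cancel hjm] at this
    exact mem_filter.2 ⟨this, subset_union_right⟩

lemma sum_sum_powersetCard_partitionsOf {M : Type*} [AddCommMonoid M] (U : Finset α) (m k : ℕ)
    (f : Finset (Finset α) → M) :
    ∑ 𝒜 ∈ partitionsOf U m, ∑ ℬ ∈ 𝒜.powersetCard k, f ℬ =
      ∑ S, ∑ ℬ ∈ partitionsOf S k, #{𝒜 ∈ partitionsOf U m | ℬ ⊆ 𝒜} • f ℬ := by
  set 𝒬 := univ.filter fun ℬ : Finset (Finset α) => ℬ ∈ partitionsOf (ℬ.biUnion id) k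
  have hfiber (S : Finset α) : {ℬ ∈ 𝒬 | ℬ.biUnion id = S} = partitionsOf S k := by
    ext ℬ
    simp only [𝒬, mem_filter, mem_univ, true_and]
    exact ⟨fun ⟨h, hS⟩ => hS ▸ h, fun h => ⟨(mem_partitionsOf.1 h).2.2.2 ▸ h,
      (mem_partitionsOf.1 h).2.2.2⟩⟩
  calc ∑ 𝒜 ∈ partitionsOf U m, ∑ ℬ ∈ 𝒜.powersetCard k, f ℬ
      = ∑ ℬ ∈ 𝒬, ∑ 𝒜 ∈ partitionsOf U m with ℬ ⊆ 𝒜, f ℬ := by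
        refine sum_comm' fun 𝒜 ℬ => ?_
        simp only [𝒬, mem_powersetCard, mem_filter, mem_univ, true_and]
        constructor
        · rintro ⟨h𝒜, hℬ𝒜, rfl⟩
          exact ⟨⟨h𝒜, hℬ𝒜⟩, mem_partitionsOf_biUnion_of_subset h𝒜 hℬ𝒜⟩
        · rintro ⟨⟨h𝒜, hℬ𝒜⟩, hℬ⟩
          exact ⟨h𝒜, hℬ𝒜, (mem_partitionsOf.1 hℬ).1⟩
    _ = ∑ S, ∑ ℬ ∈ {ℬ ∈ 𝒬 | ℬ.biUnion id = S}, #{𝒜 ∈ partitionsOf U m | ℬ ⊆ 𝒜} • f ℬ := by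
        rw [sum_fiberwise_of_maps_to fun _ _ => mem_univ _]
        simp only [sum_const]
    _ = _ := by simp only [hfiber]

-- Retractions of `S` onto `R`, extended by the identity outside `S \ R`.
def retractions (S R : Finset α) : Finset (α → α) :=
  Fintype.piFinset fun x => if x ∈ S \ R then R else {x}

def fibres (S R : Finset α) (φ : α → α) : Finset (Finset α) :=
  R.image fun r => {x ∈ S | φ x = r}

variable {R : Finset α} {φ : α → α}

lemma mem_retractions :
    φ ∈ retractions S R ↔ (∀ x ∈ S \ R, φ x ∈ R) ∧ ∀ x ∉ S \ R, φ x = x := by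
  simp only [retractions, Fintype.mem_piFinset]
  refine ⟨fun h => ⟨fun x hx => ?_, fun x hx => ?_⟩, fun h x => ?_⟩
  · simpa [hx] using h x
  · simpa [hx] using h x
  · by_cases hx : x ∈ S \ R <;> simp [hx, h.1, h.2]

lemma card_retractions (hRS : R ⊆ S) : #(retractions S R) = #R ^ (#S - #R) := by
  simp only [retractions, Fintype.card_piFinset, apply_ite card, card_singleton]
  rw [Fintype.prod_ite_mem, prod_const, card_sdiff_of_subset hRS]

lemma fibres_mem_partitionsOf (hRS : R ⊆ S) (hφ : φ ∈ retractions S R) :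
    fibres S R φ ∈ partitionsOf S #R ∧ R ∈ transversals (fibres S R φ) := by
  obtain ⟨hmaps, hfix⟩ := mem_retractions.1 hφ
  have hfixR : ∀ r ∈ R, φ r = r := fun r hr => hfix r fun h => (mem_sdiff.1 h).2 hr
  have hself : ∀ r ∈ R, r ∈ {x ∈ S | φ x = r} := fun r hr => mem_filter.2 ⟨hRS hr, hfixR r hr⟩
  have hinj : (R : Set α).InjOn fun r => {x ∈ S | φ x = r} := fun r hr r' _
      (h : {x ∈ S | φ x = r} = {x ∈ S | φ x = r'}) => by
    have hr' : r ∈ {x ∈ S | φ x = r'} := h ▸ hself r hr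
    rw [mem_filter, hfixR r hr] at hr'
    exact hr'.2
  have hcover : (fibres S R φ).biUnion id = S := by
    rw [fibres, image_biUnion]
    refine biUnion_filter_eq_of_maps_to fun x hx => ?_
    by_cases hxR : x ∈ R
    · rwa [hfixR x hxR]
    · exact hmaps x (mem_sdiff.2 ⟨hx, hxR⟩)
  refine ⟨mem_partitionsOf.2 ⟨card_image_of_injOn hinj, ?_, ?_, hcover⟩, ?_⟩
  · simpa only [fibres, forall_mem_image] using fun r hr => ⟨r, hself r hr⟩
  · rw [fibres, coe_image, hinj.pairwiseDisjoint_image]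
    exact fun r _ r' _ hrr' => disjoint_left.2 fun x hx hx' =>
      hrr' ((mem_filter.1 hx).2.symm.trans (mem_filter.1 hx').2)
  · refine mem_transversals.2 ⟨by rw [hcover]; exact hRS, ?_⟩
    simp only [fibres, forall_mem_image]
    refine fun r hr => card_eq_one.2 ⟨r, eq_singleton_iff_unique_mem.2
      ⟨mem_inter.2 ⟨hr, hself r hr⟩, fun r' hr' => ?_⟩⟩
    obtain ⟨hr'R, hr'⟩ := mem_inter.1 hr'
    exact (hfixR r' hr'R).symm.trans (mem_filter.1 hr').2

lemma injOn_fibres (hRS : R ⊆ S) : (retractions S R : Set (α → α)).InjOn (fibres S R) := by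
  intro φ hφ ψ hψ h
  obtain ⟨hφmaps, hφfix⟩ := mem_retractions.1 hφ
  obtain ⟨-, hψfix⟩ := mem_retractions.1 hψ
  funext x
  by_cases hx : x ∈ S \ R
  swap
  · rw [hφfix x hx, hψfix x hx]
  obtain ⟨r, hr, hψr⟩ := mem_image.1 (show {y ∈ S | φ y = φ x} ∈ fibres S R ψ from
    h ▸ mem_image_of_mem _ (hφmaps x hx))
  have hrfix : r ∉ S \ R := fun h => (mem_sdiff.1 h).2 hr
  have hrx : r = φ x := by
    have : r ∈ {y ∈ S | φ y = φ x} := hψr ▸ mem_filter.2 ⟨hRS hr, hψfix r hrfix⟩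
    rw [mem_filter, hφfix r hrfix] at this
    exact this.2
  have : x ∈ {y ∈ S | ψ y = r} := hψr ▸ mem_filter.2 ⟨(mem_sdiff.1 hx).1, rfl⟩
  rw [hrx] at this
  exact (mem_filter.1 this).2.symm

lemma retractionOf_mem_retractions {ℬ : Finset (Finset α)} (hℬ : ℬ ∈ partitionsOf S j)
    (hR : R ∈ transversals ℬ) : retractionOf ℬ R ∈ retractions S R := by
  obtain ⟨-, -, hpd, rfl⟩ := mem_partitionsOf.1 hℬ
  refine mem_retractions.2 ⟨fun x hx => ?_, fun x hx => ?_⟩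
  · obtain ⟨A, hA, hxA⟩ := mem_biUnion.1 (mem_sdiff.1 hx).1
    obtain ⟨r, hr, hrA⟩ := exists_mem_of_mem_transversals hR hA
    rwa [(retractionOf_eq_iff hpd hR hA hxA hr).2 hrA]
  · by_cases hxS : x ∈ ℬ.biUnion id
    · obtain ⟨A, hA, hxA⟩ := mem_biUnion.1 hxS
      exact (retractionOf_eq_iff hpd hR hA hxA (by simpa [hxS] using hx)).2 hxA
    · exact retractionOf_of_notMem hxS

lemma fibres_retractionOf {ℬ : Finset (Finset α)} (hℬ : ℬ ∈ partitionsOf S j)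
    (hR : R ∈ transversals ℬ) : fibres S R (retractionOf ℬ R) = ℬ := by
  obtain ⟨-, -, hpd, rfl⟩ := mem_partitionsOf.1 hℬ
  have hfibre : ∀ A ∈ ℬ, ∀ r ∈ R, r ∈ A → {x ∈ ℬ.biUnion id | retractionOf ℬ R x = r} = A := by
    intro A hA r hr hrA
    ext x
    rw [mem_filter]
    refine ⟨fun ⟨hxS, hxr⟩ => ?_, fun hxA => ⟨mem_biUnion.2 ⟨A, hA, hxA⟩,
      (retractionOf_eq_iff hpd hR hA hxA hr).2 hrA⟩⟩
    obtain ⟨A', hA', hxA'⟩ := mem_biUnion.1 hxS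
    rwa [hpd.elim_finset hA hA' r hrA ((retractionOf_eq_iff hpd hR hA' hxA' hr).1 hxr)]
  ext A
  simp only [fibres, mem_image]
  constructor
  · rintro ⟨r, hr, rfl⟩
    obtain ⟨A, hA, hrA⟩ := mem_biUnion.1 ((mem_transversals.1 hR).1 hr)
    rwa [hfibre A hA r hr hrA]
  · intro hA
    obtain ⟨r, hr, hrA⟩ := exists_mem_of_mem_transversals hR hA
    exact ⟨r, hr, hfibre A hA r hr hrA⟩

lemma card_filter_mem_transversals (hRS : R ⊆ S) :
    #{ℬ ∈ partitionsOf S #R | R ∈ transversals ℬ} = #R ^ (#S - #R) := by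
  rw [← card_retractions hRS]
  refine (card_nbij (fibres S R) (fun φ hφ => mem_filter.2 (fibres_mem_partitionsOf hRS hφ))
    (injOn_fibres hRS) fun ℬ hℬ => ?_).symm
  obtain ⟨hℬ, hR⟩ := mem_filter.1 hℬ
  exact ⟨retractionOf ℬ R, retractionOf_mem_retractions hℬ hR, fibres_retractionOf hℬ hR⟩

lemma transversals_subset_powersetCard {ℬ : Finset (Finset α)} (hℬ : ℬ ∈ partitionsOf S j) :
    transversals ℬ ⊆ S.powersetCard j := fun R hR => by
  obtain ⟨rfl, -, hpd, rfl⟩ := mem_partitionsOf.1 hℬ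
  exact mem_powersetCard.2 ⟨(mem_transversals.1 hR).1, card_eq_card_of_mem_transversals hpd hR⟩

lemma sum_prod_card_partitionsOf (S : Finset α) (k : ℕ) :
    ∑ ℬ ∈ partitionsOf S k, ∏ A ∈ ℬ, #A = (#S).choose k * k ^ (#S - k) := by
  calc ∑ ℬ ∈ partitionsOf S k, ∏ A ∈ ℬ, #A
      = ∑ ℬ ∈ partitionsOf S k, #{R ∈ S.powersetCard k | R ∈ transversals ℬ} := by
        refine sum_congr rfl fun ℬ hℬ => ?_
        rw [filter_mem_eq_inter, inter_eq_right.2 (transversals_subset_powersetCard hℬ),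
          card_transversals (mem_partitionsOf.1 hℬ).2.2.1]
    _ = ∑ R ∈ S.powersetCard k, #{ℬ ∈ partitionsOf S k | R ∈ transversals ℬ} :=
        sum_card_bipartiteAbove_eq_sum_card_bipartiteBelow _
    _ = ∑ R ∈ S.powersetCard k, k ^ (#S - k) := by
        refine sum_congr rfl fun R hR => ?_
        obtain ⟨hRS, rfl⟩ := mem_powersetCard.1 hR
        exact card_filter_mem_transversals hRS
    _ = (#S).choose k * k ^ (#S - k) := by rw [sum_const, card_powersetCard, smul_eq_mul]

end Partitions

lemma sum_range_choose_mul_stirling2_eq_sum_Icc {n r k : ℕ} (hkr : k ≤ r) :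
    ∑ s ∈ range (n + 1), n.choose s * stirling2 (n - s) (r - k) * s.choose k * k ^ (s - k) =
      ∑ s ∈ Icc k (n + k - r),
        n.choose s * stirling2 (n - s) (r - k) * s.choose k * k ^ (s - k) := by
  refine (sum_subset (fun s hs => ?_) fun s hs hs' => ?_).symm
  · simp only [mem_Icc, mem_range] at hs ⊢
    omega
  · simp only [mem_Icc, mem_range, not_and_or, not_le] at hs hs'
    rcases hs' with hs' | hs'
    · simp [Nat.choose_eq_zero_of_lt hs']
    · simp [stirling2_eq_zero_of_lt (show n - s < r - k by omega)]

theorem stmt_15_general (n r k : ℕ) (h2 : k ≤ r) :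
    ∑ 𝒜 ∈ Finset.univ.filter
        (fun 𝒜 : Finset (Finset (Fin n)) => isPartitionInto 𝒜 r),
      ∑ B ∈ 𝒜.powersetCard k, ∏ A ∈ B, A.card
    = ∑ s ∈ Finset.Icc k (n + k - r),
        n.choose s * stirling2 (n - s) (r - k) * s.choose k * k ^ (s - k) := by
  have hfilter : univ.filter (fun 𝒜 : Finset (Finset (Fin n)) => isPartitionInto 𝒜 r) =
      partitionsOf univ r := by
    ext 𝒜
    simp [isPartitionInto_iff]
  rw [hfilter, sum_sum_powersetCard_partitionsOf, ← sum_range_choose_mul_stirling2_eq_sum_Icc h2]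
  calc ∑ S : Finset (Fin n),
        ∑ ℬ ∈ partitionsOf S k, #{𝒜 ∈ partitionsOf univ r | ℬ ⊆ 𝒜} • ∏ A ∈ ℬ, #A
      = ∑ S : Finset (Fin n), stirling2 (n - #S) (r - k) * ((#S).choose k * k ^ (#S - k)) := by
        refine sum_congr rfl fun S _ => ?_
        rw [← sum_prod_card_partitionsOf, mul_sum]
        refine sum_congr rfl fun ℬ hℬ => ?_
        rw [card_filter_superset_partitionsOf hℬ h2, card_partitionsOf, card_compl,
          Fintype.card_fin, smul_eq_mul]
    _ = _ := by
        rw [← powerset_univ, sum_powerset_apply_card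
          (fun s => stirling2 (n - s) (r - k) * (s.choose k * k ^ (s - k))), card_univ,
          Fintype.card_fin]
        refine sum_congr rfl fun s _ => ?_
        rw [smul_eq_mul]
        ring

/-- For `1 ≤ k ≤ r ≤ n`,
`∑_{𝒜 ∈ A(n,r)} ∑_{B ⊆ 𝒜, |B| = k} ∏_{A ∈ B} |A|
  = ∑_{s=k}^{n+k−r} C(n,s)·S(n−s, r−k)·C(s,k)·k^{s−k}`. -/
theorem stmt_15 (n r k : ℕ) (h1 : 1 ≤ k) (h2 : k ≤ r) (h3 : r ≤ n) :
    ∑ 𝒜 ∈ Finset.univ.filter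
        (fun 𝒜 : Finset (Finset (Fin n)) => isPartitionInto 𝒜 r),
      ∑ B ∈ 𝒜.powersetCard k, ∏ A ∈ B, A.card
    = ∑ s ∈ Finset.Icc k (n + k - r),
        n.choose s * stirling2 (n - s) (r - k) * s.choose k * k ^ (s - k) :=
  stmt_15_general n r k h2
end

section
/- There exist constants c > 0 and ρ ∈ (0,1) such that for all n ≥ 1, the number of pairs (x, y) ∈ T_n × T_n with rank(xyx) = rank(y) (where xyx is the composite: first x, then y, then x) is at most c·n^{7/2}·ρ^n·n^{2n}. Equivalently, the probability T_n-bar that two independent uniformly random transformations x, y ∈ T_n satisfy rank(xyx) = rank(y) is at most c·n^{7/2}·ρ^n, and hence tends to 0 exponentially fast as n → ∞. -/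
open Finset Real

theorem injOn_image_of_trank_comp_eq {n : ℕ} {x y : Fin n → Fin n}
    (h : trank (x ∘ y ∘ x) = trank y) : Set.InjOn x (univ.image y : Set (Fin n)) := by
  have hsub : univ.image (x ∘ y ∘ x) ⊆ (univ.image y).image x := by
    intro a ha
    obtain ⟨b, -, rfl⟩ := mem_image.mp ha
    exact mem_image_of_mem x (mem_image_of_mem y (mem_univ (x b)))
  apply injOn_of_card_image_eq
  have := card_le_card hsub
  have := card_image_le (s := univ.image y) (f := x)
  unfold trank at h
  omega

section Counting

variable {α β : Type*} [Fintype α] [Fintype β]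

theorem card_injOn_le (s : Finset α) :
    Nat.card {f : α → β // Set.InjOn f s} ≤
      (Fintype.card β).descFactorial #s * Fintype.card β ^ (Fintype.card α - #s) := by
  classical
  let restrict (f : {f : α → β // Set.InjOn f s}) : (s ↪ β) × ({a // a ∉ s} → β) :=
    (⟨fun a => f.1 a, fun a b hab => Subtype.ext (f.2 a.2 b.2 hab)⟩, fun a => f.1 a)
  have hrestrict : Function.Injective restrict := by
    intro f g hfg
    ext a
    by_cases ha : a ∈ s
    · exact DFunLike.congr_fun (congrArg Prod.fst hfg) ⟨a, ha⟩
    · exact congrFun (congrArg Prod.snd hfg) ⟨a, ha⟩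
  calc _ ≤ Nat.card ((s ↪ β) × ({a // a ∉ s} → β)) :=
        Nat.card_le_card_of_injective restrict hrestrict
    _ = _ := by
      simp [Nat.card_eq_fintype_card, Fintype.card_embedding_eq, Fintype.card_subtype_compl]

theorem card_filter_card_image_le [DecidableEq α] [DecidableEq β] (m : ℕ) :
    #{f : α → β | #(univ.image f) ≤ m} ≤ 2 ^ Fintype.card β * m ^ Fintype.card α := by
  let lowSets : Finset (Finset β) := {t | #t ≤ m}
  have hsub : ({f : α → β | #(univ.image f) ≤ m} : Finset (α → β)) ⊆
      lowSets.biUnion fun t => Fintype.piFinset fun _ : α => t := by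
    intro f hf
    simp only [mem_filter, mem_univ, true_and] at hf
    simp only [lowSets, mem_biUnion, mem_filter, mem_univ, true_and, Fintype.mem_piFinset]
    exact ⟨_, hf, fun a => mem_image_of_mem f (mem_univ a)⟩
  calc _ ≤ ∑ t ∈ lowSets, #(Fintype.piFinset fun _ : α => t) :=
        (card_le_card hsub).trans card_biUnion_le
    _ ≤ ∑ _t ∈ lowSets, m ^ Fintype.card α := sum_le_sum fun t ht => by
        rw [Fintype.card_piFinset, prod_const, card_univ]
        exact Nat.pow_le_pow_left (mem_filter.mp ht).2 _
    _ ≤ ∑ _t : Finset β, m ^ Fintype.card α := sum_le_sum_of_subset (subset_univ _)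
    _ = 2 ^ Fintype.card β * m ^ Fintype.card α := by
        rw [sum_const, card_univ, Fintype.card_finset, smul_eq_mul]

end Counting

theorem Nat.cast_sub_le_mul_exp (n i : ℕ) : ((n - i : ℕ) : ℝ) ≤ n * exp (-(i / n)) := by
  rcases Nat.eq_zero_or_pos n with rfl | hn
  · simp
  rcases le_or_gt i n with hi | hi
  · have hn' : (0 : ℝ) < n := Nat.cast_pos.mpr hn
    calc ((n - i : ℕ) : ℝ) = n * (-(i / n) + 1) := by
          rw [Nat.cast_sub hi]; field_simp; ring
      _ ≤ n * exp (-(i / n)) := by gcongr; exact add_one_le_exp _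
  · rw [Nat.sub_eq_zero_of_le hi.le, Nat.cast_zero]
    positivity

theorem Nat.descFactorial_le_pow_mul_exp (n r : ℕ) :
    (n.descFactorial r : ℝ) ≤ n ^ r * exp (-(r.choose 2 / n)) := by
  have hsum : ∑ i ∈ range r, (i : ℝ) = r.choose 2 := by
    rw [← Nat.cast_sum, sum_range_id, ← Nat.choose_two_right]
  calc (n.descFactorial r : ℝ) = ∏ i ∈ range r, ((n - i : ℕ) : ℝ) := by
        rw [Nat.descFactorial_eq_prod_range, Nat.cast_prod]
    _ ≤ ∏ i ∈ range r, (n * exp (-(i / n)) : ℝ) :=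
        prod_le_prod (fun _ _ => by positivity) fun i _ => Nat.cast_sub_le_mul_exp n i
    _ = n ^ r * exp (-(r.choose 2 / n)) := by
        rw [prod_mul_distrib, prod_const, card_range, ← exp_sum, ← hsum, sum_neg_distrib,
          sum_div]

theorem exp_neg_choose_two_div_le {n r : ℕ} (hn : 0 < n) (hr : n ≤ 4 * r) :
    exp (-(r.choose 2 / n)) ≤ exp (1 / 8) * exp (-1 / 32) ^ n := by
  have hn' : (0 : ℝ) < n := Nat.cast_pos.mpr hn
  have hr' : (n : ℝ) ≤ 4 * r := by exact_mod_cast hr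
  have hr1 : (1 : ℝ) ≤ r := by exact_mod_cast (show 1 ≤ r by omega)
  rw [← exp_nat_mul, ← exp_add, exp_le_exp, Nat.cast_choose_two, neg_le, le_div_iff₀ hn']
  nlinarith [mul_nonneg (sub_nonneg.mpr hr') (by linarith : (0 : ℝ) ≤ 4 * r + n - 4)]

theorem descFactorial_mul_pow_le {n r : ℕ} (hn : 0 < n) (hr : r ≤ n) :
    (n.descFactorial r * n ^ (n - r) : ℝ) ≤
      n ^ n * (exp (1 / 8) * exp (-1 / 32) ^ n + if 4 * r < n then 1 else 0) := by
  have hpow : (n : ℝ) ^ r * n ^ (n - r) = n ^ n := by rw [← pow_add, Nat.add_sub_cancel' hr]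
  have hρ : 0 ≤ exp (1 / 8) * exp (-1 / 32) ^ n := by positivity
  split_ifs with hsmall
  · calc (n.descFactorial r * n ^ (n - r) : ℝ) ≤ n ^ r * n ^ (n - r) := by
          gcongr; exact_mod_cast Nat.descFactorial_le_pow n r
      _ ≤ n ^ n * (exp (1 / 8) * exp (-1 / 32) ^ n + 1) := by
          rw [hpow]; exact le_mul_of_one_le_right (by positivity) (by linarith)
  · calc (n.descFactorial r * n ^ (n - r) : ℝ)
          ≤ n ^ r * exp (-(r.choose 2 / n)) * n ^ (n - r) := by
          gcongr; exact Nat.descFactorial_le_pow_mul_exp n r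
      _ = n ^ n * exp (-(r.choose 2 / n)) := by rw [← hpow]; ring
      _ ≤ n ^ n * (exp (1 / 8) * exp (-1 / 32) ^ n + 0) := by
          rw [add_zero]; gcongr; exact exp_neg_choose_two_div_le hn (by omega)

theorem trank_le (n : ℕ) (y : Fin n → Fin n) : trank y ≤ n := by
  simpa [trank] using card_le_univ (univ.image y)

theorem card_trank_comp_eq_le (n : ℕ) :
    Nat.card {p : (Fin n → Fin n) × (Fin n → Fin n) // trank (p.1 ∘ p.2 ∘ p.1) = trank p.2}
      ≤ ∑ y : Fin n → Fin n, n.descFactorial (trank y) * n ^ (n - trank y) := by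
  let toSigma
      (p : {p : (Fin n → Fin n) × (Fin n → Fin n) // trank (p.1 ∘ p.2 ∘ p.1) = trank p.2}) :
      Σ y : Fin n → Fin n, {x : Fin n → Fin n // Set.InjOn x (univ.image y : Set (Fin n))} :=
    ⟨p.1.2, p.1.1, injOn_image_of_trank_comp_eq p.2⟩
  have htoSigma : Function.Injective toSigma := by
    rintro ⟨⟨x, y⟩, _⟩ ⟨⟨x', y'⟩, _⟩ hxy
    obtain ⟨rfl, hx⟩ := Sigma.mk.inj_iff.mp hxy
    simp_all
  calc _ ≤ _ := Nat.card_le_card_of_injective toSigma htoSigma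
    _ = _ := Nat.card_sigma
    _ ≤ _ := sum_le_sum fun y _ => by
        simpa [trank] using card_injOn_le (β := Fin n) (univ.image y)

theorem card_filter_four_mul_trank_lt_le (n : ℕ) :
    (#{y : Fin n → Fin n | 4 * trank y < n} : ℝ) ≤ (1 / 2) ^ n * n ^ n := by
  have hsub : ({y : Fin n → Fin n | 4 * trank y < n} : Finset _) ⊆
      ({y : Fin n → Fin n | #(univ.image y) ≤ n / 4} : Finset _) :=
    monotone_filter_right _ fun y hy => by simp only [trank] at hy ⊢; omega
  have hcount := (card_le_card hsub).trans (card_filter_card_image_le (α := Fin n) (n / 4))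
  simp only [Fintype.card_fin] at hcount
  calc (#{y : Fin n → Fin n | 4 * trank y < n} : ℝ) ≤ 2 ^ n * ((n / 4 : ℕ) : ℝ) ^ n := by
        exact_mod_cast hcount
    _ ≤ 2 ^ n * ((n : ℝ) / 4) ^ n := by gcongr; exact Nat.cast_div_le
    _ = (1 / 2) ^ n * n ^ n := by rw [← mul_pow, ← mul_pow]; ring_nf

/-- There are `c > 0` and `ρ ∈ (0,1)` such that for all `n ≥ 1` the number of
pairs `(x, y) ∈ T_n × T_n` with `rank (xyx) = rank y` (products composed left
to right, so `xyx` is the function `x ∘ y ∘ x`) is at most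
`c·n^{7/2}·ρ^n·n^{2n}`; hence the probability that two uniformly random
transformations satisfy this tends to `0` exponentially fast. -/
theorem stmt_16 :
    ∃ c : ℝ, 0 < c ∧ ∃ ρ : ℝ, 0 < ρ ∧ ρ < 1 ∧ ∀ n : ℕ, 1 ≤ n →
      (Nat.card {p : (Fin n → Fin n) × (Fin n → Fin n) //
          trank (p.1 ∘ p.2 ∘ p.1) = trank p.2} : ℝ)
        ≤ c * (n : ℝ) ^ ((7 : ℝ) / 2) * ρ ^ n * (n : ℝ) ^ (2 * n) := by
  refine ⟨exp (1 / 8) + 1, by positivity, exp (-1 / 32), exp_pos _,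
    exp_lt_one_iff.mpr (by norm_num), fun n hn => ?_⟩
  have hhalf : (1 / 2 : ℝ) ^ n ≤ exp (-1 / 32) ^ n := by
    gcongr; linarith [add_one_le_exp (-1 / 32 : ℝ)]
  have hone : (1 : ℝ) ≤ (n : ℝ) ^ ((7 : ℝ) / 2) := one_le_rpow (by exact_mod_cast hn) (by norm_num)
  calc (Nat.card {p : (Fin n → Fin n) × (Fin n → Fin n) //
          trank (p.1 ∘ p.2 ∘ p.1) = trank p.2} : ℝ)
      ≤ ∑ y : Fin n → Fin n, (n.descFactorial (trank y) * n ^ (n - trank y) : ℝ) := by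
        exact_mod_cast card_trank_comp_eq_le n
    _ ≤ ∑ y : Fin n → Fin n,
          n ^ n * (exp (1 / 8) * exp (-1 / 32) ^ n + if 4 * trank y < n then 1 else 0) :=
        sum_le_sum fun y _ => descFactorial_mul_pow_le hn (trank_le n y)
    _ = n ^ n * (n ^ n * (exp (1 / 8) * exp (-1 / 32) ^ n)
          + #{y : Fin n → Fin n | 4 * trank y < n}) := by
        simp [← mul_sum, sum_add_distrib, sum_boole]
    _ ≤ n ^ n * (n ^ n * (exp (1 / 8) * exp (-1 / 32) ^ n) + (1 / 2) ^ n * n ^ n) := by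
        gcongr; exact card_filter_four_mul_trank_lt_le n
    _ ≤ (exp (1 / 8) + 1) * 1 * exp (-1 / 32) ^ n * n ^ (2 * n) := by
        rw [two_mul, pow_add]; nlinarith [pow_pos (show (0 : ℝ) < n by positivity) n]
    _ ≤ (exp (1 / 8) + 1) * n ^ ((7 : ℝ) / 2) * exp (-1 / 32) ^ n * n ^ (2 * n) := by
        gcongr
end
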